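/- arXiv:1603.07229 — 6 statements merged into one kernel-verified Lean document; each statement's English description precedes it below -/
import Mathlib

section
/- Concavity of the tradeoff functions (Lemma 3.8): For each i ∈ {1,…,k+1}, the function ĥ_i : ℝ → ℝ ∪ {−∞} is concave (as an extended-real-valued function). -/
/-!
Lemma 3.8 (concavity of the cumulative tradeoff functions `ĥ_i`): for each
`i ∈ {1, …, k+1}` (here 0-indexed: `i ∈ {0, …, k}`), the function
`ĥ_i : ℝ → ℝ ∪ {-∞}` is concave.

`ĥ_{k+1}(c) = 0` for `c ≥ 0` and `-∞` otherwise; recursively, `ĥ_i(c)` is the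
optimal value of maximizing `E_{v∼f_i}[ĥ_{i+1}(v x(v) - p(v))] + c + p(0)`
over IC single-period mechanisms `(x, p)` with allocation in `[0,1]` and
expected utility exactly `c`.
-/

open MeasureTheory

namespace Stmt6

open scoped Classical

variable {k : ℕ}

/-- The extended-real-valued objective
`E_{v∼μ}[g(v x(v) - p(v))] + c + p(0)` of the problem defining `ĥ_i(c)`,
with value `⊥` when the tradeoff term is not a.e. finite and integrable. -/
noncomputable def hObj (μ : Measure ℝ) (g : ℝ → EReal) (c : ℝ) (x p : ℝ → ℝ) : EReal :=
  if (∀ᵐ v ∂μ, ⊥ < g (v * x v - p v) ∧ g (v * x v - p v) < ⊤)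
      ∧ Integrable (fun v => (g (v * x v - p v)).toReal) μ then
    ((∫ v, (g (v * x v - p v)).toReal ∂μ + c + p 0 : ℝ) : EReal)
  else ⊥

/-- The optimal value of the problem defining `ĥ_i(c)` with value distribution
`μ` and continuation tradeoff function `g`. -/
noncomputable def hStep (μ : Measure ℝ) (g : ℝ → EReal) (c : ℝ) : EReal :=
  sSup {r : EReal | ∃ x p : ℝ → ℝ, (∀ v, x v ∈ Set.Icc (0 : ℝ) 1) ∧
    (∀ v v', v * x v' - p v' ≤ v * x v - p v) ∧
    (∫ v, (v * x v - p v) ∂μ) = c ∧ r = hObj μ g c x p}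

/-- Auxiliary downward recursion: `hHatAux μ m` is the tradeoff function of
(0-indexed) period `k - m`. -/
noncomputable def hHatAux (μ : Fin k → Measure ℝ) : ℕ → ℝ → EReal
  | 0 => fun c => if 0 ≤ c then (0 : EReal) else ⊥
  | (m + 1) => fun c =>
      if hm : m < k then
        hStep (μ ⟨k - (m + 1), by omega⟩) (hHatAux μ m) c
      else ⊥

/-- The cumulative tradeoff function `ĥ` of (0-indexed) period `i`;
`hHat μ k` is the terminal function. -/
noncomputable def hHat (μ : Fin k → Measure ℝ) (i : ℕ) : ℝ → EReal :=
  hHatAux μ (k - i)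

end Stmt6

/-!
Concavity propagates backwards through the recursion. Mixing two feasible mechanisms for
utilities `c₁` and `c₂` with weights `a`, `b` (both allocation and payment) gives a feasible
mechanism for `a c₁ + b c₂` whose utility at every value is the same mix, so concavity of
`ĥ_{i+1}` bounds its objective below by the mix of the two objectives. For the mixed objective
to be defined one needs `ĥ_{i+1}` bounded above (each period adds at most `h_i`, since
`c + p(0) ≤ h_i`) and measurable (its superlevel sets are intervals), and IC utilities to be
measurable (they are monotone).
-/

open MeasureTheory Set

namespace Stmt6

def ERealConcave (g : ℝ → EReal) : Prop :=
  ∀ c₁ c₂ a b : ℝ, 0 ≤ a → 0 ≤ b → a + b = 1 →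
    (a : EReal) * g c₁ + (b : EReal) * g c₂ ≤ g (a * c₁ + b * c₂)

section ERealConcave

variable {g : ℝ → EReal}

lemma ERealConcave.of_pos
    (H : ∀ c₁ c₂ a b : ℝ, 0 < a → 0 < b → a + b = 1 →
      (a : EReal) * g c₁ + (b : EReal) * g c₂ ≤ g (a * c₁ + b * c₂)) :
    ERealConcave g := by
  intro c₁ c₂ a b ha hb hab
  rcases ha.eq_or_lt with rfl | ha
  · obtain rfl : b = 1 := by linarith
    simp
  rcases hb.eq_or_lt with rfl | hb
  · obtain rfl : a = 1 := by linarith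
    simp
  exact H c₁ c₂ a b ha hb hab

lemma erealConcave_bot : ERealConcave fun _ => ⊥ :=
  .of_pos fun _ _ _ _ ha _ _ => by simp [EReal.coe_mul_bot_of_pos ha]

lemma ERealConcave.ordConnected_superlevel (hg : ERealConcave g) (t : EReal) :
    OrdConnected {c | t ≤ g c} := by
  rw [← convex_iff_ordConnected]
  intro c₁ h₁ c₂ h₂ a b ha hb hab
  have ha' : (0 : EReal) ≤ a := by exact_mod_cast ha
  have hb' : (0 : EReal) ≤ b := by exact_mod_cast hb
  calc t = (a : EReal) * t + (b : EReal) * t := by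
        rw [← EReal.right_distrib_of_nonneg ha' hb', ← EReal.coe_add, hab, EReal.coe_one,
          one_mul]
    _ ≤ (a : EReal) * g c₁ + (b : EReal) * g c₂ :=
        add_le_add (mul_le_mul_of_nonneg_left h₁ ha') (mul_le_mul_of_nonneg_left h₂ hb')
    _ ≤ g (a • c₁ + b • c₂) := hg c₁ c₂ a b ha hb hab

/-- Superlevel sets of a concave function on `ℝ` are intervals. -/
lemma ERealConcave.measurable (hg : ERealConcave g) : Measurable g :=
  measurable_of_Ici fun t => (hg.ordConnected_superlevel t).measurableSet

end ERealConcave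

lemma exists_lt_coe_mul_of_lt_coe_mul_sSup {a : ℝ} (ha : 0 < a) {S : Set EReal} {s : EReal}
    (hs : s < a * sSup S) : ∃ r ∈ S, s < a * r := by
  have ha' : (0 : EReal) < a := by exact_mod_cast ha
  by_contra! h
  refine hs.not_ge ?_
  rw [mul_comm, ← EReal.le_div_iff_mul_le ha' (EReal.coe_ne_top a)]
  refine sSup_le fun r hr => ?_
  rw [EReal.le_div_iff_mul_le ha' (EReal.coe_ne_top a), mul_comm]
  exact h r hr

section Mechanism

variable {ν : Measure ℝ} {hi : ℝ} {x p : ℝ → ℝ}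

lemma utility_sub_utility_le (hIC : ∀ v v', v * x v' - p v' ≤ v * x v - p v) (v w : ℝ) :
    (v * x v - p v) - (w * x w - p w) ≤ (v - w) * x v := by
  linarith [hIC w v]

lemma monotone_utility (hx : ∀ v, 0 ≤ x v) (hIC : ∀ v v', v * x v' - p v' ≤ v * x v - p v) :
    Monotone fun v => v * x v - p v := by
  intro w v hwv
  have := mul_nonpos_of_nonpos_of_nonneg (sub_nonpos.2 hwv) (hx w)
  linarith [utility_sub_utility_le hIC w v]

lemma utility_le_of_mem_Icc (hx : ∀ v, x v ∈ Icc (0 : ℝ) 1)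
    (hIC : ∀ v v', v * x v' - p v' ≤ v * x v - p v) {v : ℝ} (hv : v ∈ Icc 0 hi) :
    v * x v - p v ≤ hi - p 0 := by
  have := mul_le_of_le_one_right hv.1 (hx v).2
  linarith [utility_sub_utility_le hIC v 0, hv.2]

lemma integrable_utility [IsFiniteMeasure ν] (hsupp : ∀ᵐ v ∂ν, v ∈ Icc 0 hi)
    (hx : ∀ v, x v ∈ Icc (0 : ℝ) 1) (hIC : ∀ v v', v * x v' - p v' ≤ v * x v - p v) :
    Integrable (fun v => v * x v - p v) ν := by
  have hmono := monotone_utility (fun v => (hx v).1) hIC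
  refine integrable_of_le_of_le hmono.measurable.aestronglyMeasurable ?_ ?_
    (integrable_const (0 * x 0 - p 0)) (integrable_const (hi - p 0))
  · filter_upwards [hsupp] with v hv using hmono hv.1
  · filter_upwards [hsupp] with v hv using utility_le_of_mem_Icc hx hIC hv

lemma integral_utility_add_le [IsProbabilityMeasure ν] (hsupp : ∀ᵐ v ∂ν, v ∈ Icc 0 hi)
    (hx : ∀ v, x v ∈ Icc (0 : ℝ) 1) (hIC : ∀ v v', v * x v' - p v' ≤ v * x v - p v) :
    ∫ v, (v * x v - p v) ∂ν + p 0 ≤ hi := by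
  have := integral_mono_ae (integrable_utility hsupp hx hIC) (integrable_const (hi - p 0))
    (by filter_upwards [hsupp] with v hv using utility_le_of_mem_Icc hx hIC hv)
  simp only [integral_const, probReal_univ, one_smul] at this
  linarith

end Mechanism

def IsFeasible (ν : Measure ℝ) (c : ℝ) (x p : ℝ → ℝ) : Prop :=
  (∀ v, x v ∈ Icc (0 : ℝ) 1) ∧ (∀ v v', v * x v' - p v' ≤ v * x v - p v) ∧
    ∫ v, (v * x v - p v) ∂ν = c

section Feasible

variable {ν : Measure ℝ} {g : ℝ → EReal} {c c₁ c₂ : ℝ} {x p x₁ p₁ x₂ p₂ : ℝ → ℝ}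

lemma hObj_le_hStep (h : IsFeasible ν c x p) : hObj ν g c x p ≤ hStep ν g c :=
  le_sSup ⟨x, p, h.1, h.2.1, h.2.2, rfl⟩

lemma exists_isFeasible_lt_coe_mul_hObj {a : ℝ} (ha : 0 < a) {s : EReal}
    (hs : s < a * hStep ν g c) : ∃ x p, IsFeasible ν c x p ∧ s < a * hObj ν g c x p := by
  obtain ⟨_, ⟨x, p, hx, hIC, hc, rfl⟩, hlt⟩ := exists_lt_coe_mul_of_lt_coe_mul_sSup ha hs
  exact ⟨x, p, ⟨hx, hIC, hc⟩, hlt⟩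

lemma IsFeasible.convex_combination [IsFiniteMeasure ν] {hi : ℝ}
    (hsupp : ∀ᵐ v ∂ν, v ∈ Icc 0 hi) {a b : ℝ} (ha : 0 ≤ a) (hb : 0 ≤ b) (hab : a + b = 1)
    (h₁ : IsFeasible ν c₁ x₁ p₁) (h₂ : IsFeasible ν c₂ x₂ p₂) :
    IsFeasible ν (a * c₁ + b * c₂) (fun v => a * x₁ v + b * x₂ v)
      (fun v => a * p₁ v + b * p₂ v) := by
  obtain ⟨hx₁, hIC₁, rfl⟩ := h₁
  obtain ⟨hx₂, hIC₂, rfl⟩ := h₂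
  refine ⟨fun v => ⟨?_, ?_⟩, fun v v' => ?_, ?_⟩
  · have := (hx₁ v).1; have := (hx₂ v).1; positivity
  · nlinarith [(hx₁ v).2, (hx₂ v).2]
  · nlinarith [mul_le_mul_of_nonneg_left (hIC₁ v v') ha,
      mul_le_mul_of_nonneg_left (hIC₂ v v') hb]
  · have hu : (fun v => v * (a * x₁ v + b * x₂ v) - (a * p₁ v + b * p₂ v))
        = fun v => a * (v * x₁ v - p₁ v) + b * (v * x₂ v - p₂ v) := by
      funext v; ring
    rw [hu, integral_add ((integrable_utility hsupp hx₁ hIC₁).const_mul a)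
      ((integrable_utility hsupp hx₂ hIC₂).const_mul b), integral_const_mul, integral_const_mul]

end Feasible

section Objective

variable {ν : Measure ℝ} {g : ℝ → EReal} {M : ℝ} {c₁ c₂ : ℝ} {x p x₁ p₁ x₂ p₂ : ℝ → ℝ}

lemma hObj_convex_combination [IsFiniteMeasure ν] (hg : ERealConcave g)
    (hgM : ∀ c, g c ≤ M) {a b : ℝ} (ha : 0 < a) (hb : 0 < b) (hab : a + b = 1)
    (hu : ∀ v, v * x v - p v = a * (v * x₁ v - p₁ v) + b * (v * x₂ v - p₂ v))
    (hp : p 0 = a * p₁ 0 + b * p₂ 0) (hmeas : Measurable fun v => v * x v - p v) :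
    (a : EReal) * hObj ν g c₁ x₁ p₁ + (b : EReal) * hObj ν g c₂ x₂ p₂
      ≤ hObj ν g (a * c₁ + b * c₂) x p := by
  rw [hObj, hObj]
  split_ifs with h₁ h₂ h₂
  rotate_left
  · simp [EReal.coe_mul_bot_of_pos hb]
  · simp [EReal.coe_mul_bot_of_pos ha]
  · simp [EReal.coe_mul_bot_of_pos ha]
  obtain ⟨hfin₁, hint₁⟩ := h₁
  obtain ⟨hfin₂, hint₂⟩ := h₂
  set G₁ := fun v => (g (v * x₁ v - p₁ v)).toReal
  set G₂ := fun v => (g (v * x₂ v - p₂ v)).toReal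
  set G := fun v => (g (v * x v - p v)).toReal
  have hlow : ∀ᵐ v ∂ν, ((a * G₁ v + b * G₂ v : ℝ) : EReal) ≤ g (v * x v - p v) := by
    filter_upwards [hfin₁, hfin₂] with v hv₁ hv₂
    rw [hu, EReal.coe_add, EReal.coe_mul, EReal.coe_mul,
      EReal.coe_toReal hv₁.2.ne hv₁.1.ne', EReal.coe_toReal hv₂.2.ne hv₂.1.ne']
    exact hg _ _ a b ha.le hb.le hab
  have hfin : ∀ᵐ v ∂ν, ⊥ < g (v * x v - p v) ∧ g (v * x v - p v) < ⊤ := by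
    filter_upwards [hlow] with v hv
    exact ⟨(EReal.bot_lt_coe _).trans_le hv, (hgM _).trans_lt (EReal.coe_lt_top M)⟩
  have hGlow : ∀ᵐ v ∂ν, a * G₁ v + b * G₂ v ≤ G v := by
    filter_upwards [hlow, hfin] with v hv hvfin
    simpa only [EReal.toReal_coe] using
      EReal.toReal_le_toReal hv (EReal.coe_ne_bot _) hvfin.2.ne
  have hint₁₂ : Integrable (fun v => a * G₁ v + b * G₂ v) ν :=
    (hint₁.const_mul a).add (hint₂.const_mul b)
  have hint : Integrable G ν := by
    refine integrable_of_le_of_le (hg.measurable.comp hmeas).ereal_toReal.aestronglyMeasurable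
      hGlow ?_ hint₁₂ (integrable_const M)
    filter_upwards [hfin] with v hv
    simpa only [EReal.toReal_coe] using
      EReal.toReal_le_toReal (hgM _) hv.1.ne' (EReal.coe_ne_top M)
  have hI : a * ∫ v, G₁ v ∂ν + b * ∫ v, G₂ v ∂ν ≤ ∫ v, G v ∂ν := by
    rw [← integral_const_mul, ← integral_const_mul, ← integral_add (hint₁.const_mul a)
      (hint₂.const_mul b)]
    exact integral_mono_ae hint₁₂ hint hGlow
  rw [hObj, if_pos ⟨hfin, hint⟩, ← EReal.coe_mul, ← EReal.coe_mul, ← EReal.coe_add,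
    EReal.coe_le_coe_iff, hp]
  linarith

end Objective

section Step

variable {ν : Measure ℝ} {hi : ℝ} {g : ℝ → EReal} {M : ℝ}

lemma erealConcave_hStep [IsFiniteMeasure ν] (hsupp : ∀ᵐ v ∂ν, v ∈ Icc 0 hi)
    (hg : ERealConcave g) (hgM : ∀ c, g c ≤ M) : ERealConcave (hStep ν g) := by
  refine .of_pos fun c₁ c₂ a b ha hb hab => EReal.add_le_of_forall_lt fun s hs t ht => ?_
  obtain ⟨x₁, p₁, h₁, hs₁⟩ := exists_isFeasible_lt_coe_mul_hObj ha hs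
  obtain ⟨x₂, p₂, h₂, ht₂⟩ := exists_isFeasible_lt_coe_mul_hObj hb ht
  have h := h₁.convex_combination hsupp ha.le hb.le hab h₂
  calc s + t ≤ (a : EReal) * hObj ν g c₁ x₁ p₁ + (b : EReal) * hObj ν g c₂ x₂ p₂ :=
        add_le_add hs₁.le ht₂.le
    _ ≤ hObj ν g (a * c₁ + b * c₂) _ _ :=
        hObj_convex_combination hg hgM ha hb hab (fun v => by ring) rfl
          (monotone_utility (fun v => (h.1 v).1) h.2.1).measurable
    _ ≤ hStep ν g (a * c₁ + b * c₂) := hObj_le_hStep h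

lemma hStep_le [IsProbabilityMeasure ν] (hsupp : ∀ᵐ v ∂ν, v ∈ Icc 0 hi)
    (hgM : ∀ c, g c ≤ M) (c : ℝ) : hStep ν g c ≤ ((M + hi : ℝ) : EReal) := by
  refine sSup_le ?_
  rintro _ ⟨x, p, hx, hIC, rfl, rfl⟩
  rw [hObj]
  split_ifs with h
  · have hG : ∫ v, (g (v * x v - p v)).toReal ∂ν ≤ M := by
      have := integral_mono_ae h.2 (integrable_const M) (by
        filter_upwards [h.1] with v hv
        simpa only [EReal.toReal_coe] using
          EReal.toReal_le_toReal (hgM _) hv.1.ne' (EReal.coe_ne_top M))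
      simpa only [integral_const, probReal_univ, one_smul] using this
    have := integral_utility_add_le hsupp hx hIC
    exact EReal.coe_le_coe_iff.2 (by linarith)
  · exact bot_le

end Step

section Recursion

variable {k : ℕ} {μ : Fin k → Measure ℝ} {h : Fin k → ℝ}

lemma hHatAux_succ_of_lt {m : ℕ} (hm : m < k) :
    hHatAux μ (m + 1) = hStep (μ ⟨k - (m + 1), by omega⟩) (hHatAux μ m) :=
  funext fun _ => dif_pos hm

lemma hHatAux_succ_of_not_lt {m : ℕ} (hm : ¬m < k) : hHatAux μ (m + 1) = fun _ => ⊥ :=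
  funext fun _ => dif_neg hm

lemma erealConcave_hHatAux_zero : ERealConcave (hHatAux μ 0) := by
  refine .of_pos fun c₁ c₂ a b ha hb _ => ?_
  simp only [hHatAux]
  split_ifs with h₁ h₂ h <;> simp [EReal.coe_mul_bot_of_pos, ha, hb]
  exact h (by positivity)

variable [∀ i, IsProbabilityMeasure (μ i)]

lemma exists_hHatAux_le (hsupp : ∀ i, ∀ᵐ v ∂(μ i), v ∈ Icc 0 (h i)) (m : ℕ) :
    ∃ M : ℝ, ∀ c, hHatAux μ m c ≤ M := by
  induction m with
  | zero => exact ⟨0, fun c => by simp only [hHatAux]; split_ifs <;> simp⟩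
  | succ m ih =>
    obtain ⟨M, hM⟩ := ih
    by_cases hm : m < k
    · rw [hHatAux_succ_of_lt hm]
      exact ⟨_, hStep_le (hsupp _) hM⟩
    · rw [hHatAux_succ_of_not_lt hm]
      exact ⟨0, fun _ => bot_le⟩

lemma erealConcave_hHatAux (hsupp : ∀ i, ∀ᵐ v ∂(μ i), v ∈ Icc 0 (h i)) (m : ℕ) :
    ERealConcave (hHatAux μ m) := by
  induction m with
  | zero => exact erealConcave_hHatAux_zero
  | succ m ih =>
    by_cases hm : m < k
    · obtain ⟨M, hM⟩ := exists_hHatAux_le hsupp m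
      rw [hHatAux_succ_of_lt hm]
      exact erealConcave_hStep (hsupp _) ih hM
    · rw [hHatAux_succ_of_not_lt hm]
      exact erealConcave_bot

end Recursion

lemma ae_mem_withDensity_ofReal {α : Type*} [MeasurableSpace α] {μ : Measure α} {f : α → ℝ}
    {s : Set α} (hs : MeasurableSet s) (hf : ∀ t ∉ s, f t = 0) :
    ∀ᵐ v ∂μ.withDensity (fun t => ENNReal.ofReal (f t)), v ∈ s := by
  change μ.withDensity _ sᶜ = 0
  rw [withDensity_apply _ hs.compl,
    setLIntegral_congr_fun hs.compl fun t ht => by rw [hf t ht, ENNReal.ofReal_zero]]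
  simp

end Stmt6

open Stmt6 in
theorem stmt_6_general {k : ℕ} (h : Fin k → ℝ)
    (f : Fin k → ℝ → ℝ)
    (hfsupp : ∀ i t, t ∉ Set.Icc 0 (h i) → f i t = 0)
    (μ : Fin k → Measure ℝ)
    (hμ : ∀ i, μ i = MeasureTheory.volume.withDensity (fun t => ENNReal.ofReal (f i t)))
    (hprob : ∀ i, IsProbabilityMeasure (μ i)) :
    ∀ i : ℕ, i ≤ k → ∀ (c₁ c₂ a b : ℝ), 0 ≤ a → 0 ≤ b → a + b = 1 →
      (a : EReal) * hHat μ i c₁ + (b : EReal) * hHat μ i c₂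
        ≤ hHat μ i (a * c₁ + b * c₂) := by
  have hsupp : ∀ i, ∀ᵐ v ∂(μ i), v ∈ Icc 0 (h i) := fun i =>
    hμ i ▸ ae_mem_withDensity_ofReal measurableSet_Icc (hfsupp i)
  intro i _
  exact erealConcave_hHatAux hsupp (k - i)

open Stmt6 in
/-- **Lemma 3.8**: each cumulative tradeoff function `ĥ_i` is concave (as an
extended-real-valued function). -/
theorem stmt_6 {k : ℕ} (h : Fin k → ℝ) (hh : ∀ i, 0 ≤ h i)
    (f : Fin k → ℝ → ℝ) (hf : ∀ i t, 0 ≤ f i t)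
    (hfsupp : ∀ i t, t ∉ Set.Icc 0 (h i) → f i t = 0)
    (μ : Fin k → Measure ℝ)
    (hμ : ∀ i, μ i = MeasureTheory.volume.withDensity (fun t => ENNReal.ofReal (f i t)))
    (hprob : ∀ i, IsProbabilityMeasure (μ i)) :
    ∀ i : ℕ, i ≤ k → ∀ (c₁ c₂ a b : ℝ), 0 ≤ a → 0 ≤ b → a + b = 1 →
      (a : EReal) * hHat μ i c₁ + (b : EReal) * hHat μ i c₂
        ≤ hHat μ i (a * c₁ + b * c₂) :=
  stmt_6_general h f hfsupp μ hμ hprob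
end

section
/- Single-crossing comparison (Lemma 3.9): Let h : ℝ → ℝ be a concave function, let z be a random variable with density f, and let u_1, u_2 : ℝ → ℝ be monotone non-decreasing functions with E[u_1(z)] = E[u_2(z)], all relevant expectations being finite. Suppose there exists a threshold z⁰ such that u_1(z) ≥ u_2(z) for all z ≤ z⁰ and u_1(z) ≤ u_2(z) for all z > z⁰. Then E[h(u_1(z))] ≥ E[h(u_2(z))]. -/
open MeasureTheory

/-- A concave function on `ℝ` has a supporting line at every point. -/
lemma exists_support_line (h : ℝ → ℝ) (hconc : ConcaveOn ℝ Set.univ h) (y₀ : ℝ) :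
    ∃ c : ℝ, ∀ x : ℝ, h x ≤ h y₀ + c * (x - y₀) := by
  set S : Set ℝ := {s : ℝ | ∃ x : ℝ, y₀ < x ∧ s = (h x - h y₀) / (x - y₀)} with hS
  have hne : S.Nonempty := ⟨(h (y₀ + 1) - h y₀) / (y₀ + 1 - y₀), y₀ + 1, by linarith, rfl⟩
  have hbdd : BddAbove S := by
    refine ⟨(h y₀ - h (y₀ - 1)) / (y₀ - (y₀ - 1)), ?_⟩
    rintro s ⟨x, hx, rfl⟩
    exact hconc.slope_anti_adjacent trivial trivial (by linarith) hx
  set c := sSup S with hc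
  refine ⟨c, fun x => ?_⟩
  rcases lt_trichotomy x y₀ with hlt | heq | hgt
  · -- x < y₀ : slope(x, y₀) is an upper bound for S, so c ≤ slope(x,y₀)
    have hub : (h y₀ - h x) / (y₀ - x) ∈ upperBounds S := by
      rintro s ⟨t, ht, rfl⟩
      exact hconc.slope_anti_adjacent trivial trivial hlt ht
    have hcle : c ≤ (h y₀ - h x) / (y₀ - x) := csSup_le hne hub
    have hpos : (0:ℝ) < y₀ - x := by linarith
    nlinarith [mul_le_mul_of_nonneg_right hcle hpos.le,
      div_mul_cancel₀ (h y₀ - h x) hpos.ne']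
  · simp [heq]
  · have hmem : (h x - h y₀) / (x - y₀) ∈ S := ⟨x, hgt, rfl⟩
    have hle : (h x - h y₀) / (x - y₀) ≤ c := le_csSup hbdd hmem
    have hpos : (0:ℝ) < x - y₀ := by linarith
    nlinarith [mul_le_mul_of_nonneg_right hle hpos.le,
      div_mul_cancel₀ (h x - h y₀) hpos.ne']

/-- Key pointwise inequality: if `a` lies on the segment between `b` and `y₀`,
and `c` is a supporting slope for the concave `h` at `y₀`, then
`h b + c * (a - b) ≤ h a`. -/
lemma key_ineq (h : ℝ → ℝ) (hconc : ConcaveOn ℝ Set.univ h) (y₀ c : ℝ)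
    (hsupp : ∀ x : ℝ, h x ≤ h y₀ + c * (x - y₀))
    (a b : ℝ) (ha : a ∈ segment ℝ b y₀) :
    h b + c * (a - b) ≤ h a := by
  obtain ⟨s, t, hs, ht, hst, rfl⟩ := ha
  have hcomb := hconc.2 (Set.mem_univ b) (Set.mem_univ y₀) hs ht hst
  simp only [smul_eq_mul] at hcomb ⊢
  have hb := hsupp b
  have hs' : s = 1 - t := by linarith
  subst hs'
  nlinarith [mul_le_mul_of_nonneg_left hb ht]

/-- **Lemma 3.9** (single-crossing comparison for concave functions). -/
theorem stmt_7 (h : ℝ → ℝ) (hconc : ConcaveOn ℝ Set.univ h)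
    (f : ℝ → ℝ) (hf : ∀ z, 0 ≤ f z)
    (μ : Measure ℝ)
    (hμ : μ = MeasureTheory.volume.withDensity (fun z => ENNReal.ofReal (f z)))
    (hprob : IsProbabilityMeasure μ)
    (u₁ u₂ : ℝ → ℝ) (hu₁ : Monotone u₁) (hu₂ : Monotone u₂)
    (hint₁ : Integrable u₁ μ) (hint₂ : Integrable u₂ μ)
    (hinth₁ : Integrable (fun z => h (u₁ z)) μ)
    (hinth₂ : Integrable (fun z => h (u₂ z)) μ)
    (hmean : ∫ z, u₁ z ∂μ = ∫ z, u₂ z ∂μ)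
    (z₀ : ℝ)
    (hbelow : ∀ z ≤ z₀, u₂ z ≤ u₁ z)
    (habove : ∀ z, z₀ < z → u₁ z ≤ u₂ z) :
    ∫ z, h (u₂ z) ∂μ ≤ ∫ z, h (u₁ z) ∂μ := by
  obtain ⟨c, hsupp⟩ := exists_support_line h hconc (u₁ z₀)
  have hpt : ∀ z, h (u₂ z) + c * (u₁ z - u₂ z) ≤ h (u₁ z) := by
    intro z
    refine key_ineq h hconc (u₁ z₀) c hsupp (u₁ z) (u₂ z) ?_
    rcases le_or_gt z z₀ with hz | hz
    · rw [segment_eq_Icc ((hbelow z hz).trans (hu₁ hz))]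
      exact ⟨hbelow z hz, hu₁ hz⟩
    · rw [segment_symm, segment_eq_Icc ((hu₁ hz.le).trans (habove z hz))]
      exact ⟨hu₁ hz.le, habove z hz⟩
  have hintL : Integrable (fun z => h (u₂ z) + c * (u₁ z - u₂ z)) μ :=
    hinth₂.add ((hint₁.sub hint₂).const_mul c)
  have hmono : ∫ z, (h (u₂ z) + c * (u₁ z - u₂ z)) ∂μ ≤ ∫ z, h (u₁ z) ∂μ :=
    integral_mono hintL hinth₁ hpt
  have h1 : Integrable (fun z => c * (u₁ z - u₂ z)) μ := by
    have := (hint₁.sub hint₂).const_mul c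
    simpa using this
  have heq : ∫ z, (h (u₂ z) + c * (u₁ z - u₂ z)) ∂μ = ∫ z, h (u₂ z) ∂μ := by
    rw [integral_add hinth₂ h1, integral_const_mul, integral_sub hint₁ hint₂, hmean]
    ring
  linarith [heq ▸ hmono]
end

section
/- Constant mechanisms dominate for concave tradeoffs (core of Lemma 3.10): Let h : ℝ → ℝ ∪ {−∞} be concave, let v be a random variable with density f supported in [0, h̄] with E[v] > 0, and let (x, p) be an incentive compatible single-period mechanism (x(v) ∈ [0,1], and v x(v) − p(v) ≥ v x(v') − p(v') for all v, v') with expected utility c := E[v x(v) − p(v)]. Then Y := (c + p(0))/E[v] satisfies 0 ≤ Y ≤ 1, the constant mechanism with allocation Y and payment Q := p(0) has expected utility E[v Y − Q] = c, and E[h(v Y − Q)] ≥ E[h(v x(v) − p(v))]. -/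
/-!
The utility `u v = v * x v - p v` of an incentive compatible mechanism is the upper envelope of
the affine functions `v ↦ v * x v' - p v'`, hence convex and minimal at `0`. The constant
mechanism has the affine utility `L v = v * Y - p 0`, with `L 0 = u 0` and, by the choice of `Y`,
the same mean as `u`. As `u - L` is convex and vanishes at `0`, it changes sign at most once, at
some `b`, so `L v` always lies between `u v` and `m = L b`. For a concave `h` with supergradient
`k` at `m` this gives `h (u v) ≤ h (L v) + k * (u v - L v)`, and the error term integrates to zero.
The infinite values of `h` only add degenerate cases: if `h` is `⊤` somewhere, concavity leaves it
finitely many finite values, which forces `u` to be a.e. constant.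
-/

open MeasureTheory

namespace Stmt8

open scoped Classical

/-- Expectation of an extended-real-valued function, with value `⊥` when the
function is not a.e. finite and integrable. -/
noncomputable def eExp (μ : Measure ℝ) (φ : ℝ → EReal) : EReal :=
  if (∀ᵐ v ∂μ, ⊥ < φ v ∧ φ v < ⊤) ∧ Integrable (fun v => (φ v).toReal) μ then
    ((∫ v, (φ v).toReal ∂μ : ℝ) : EReal)
  else ⊥

def EConcave (h : ℝ → EReal) : Prop :=
  ∀ (u₁ u₂ a b : ℝ), 0 ≤ a → 0 ≤ b → a + b = 1 →
    (a : EReal) * h u₁ + (b : EReal) * h u₂ ≤ h (a * u₁ + b * u₂)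

end Stmt8

open Set

theorem ae_mem_of_withDensity_ofReal {α : Type*} [MeasurableSpace α] {ν : Measure α}
    {f : α → ℝ} {s : Set α} (hs : MeasurableSet s) (hf : ∀ a ∉ s, f a = 0) :
    ∀ᵐ a ∂ν.withDensity (fun a => ENNReal.ofReal (f a)), a ∈ s := by
  refine ae_iff.2 ?_
  change ν.withDensity _ sᶜ = 0
  rw [withDensity_apply _ hs.compl,
    setLIntegral_congr_fun hs.compl (g := 0) fun a ha => by simp [hf a ha]]
  simp

theorem ConvexOn.aestronglyMeasurable_of_ae_mem {E : Type*} [NormedAddCommGroup E]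
    [NormedSpace ℝ E] [FiniteDimensional ℝ E] [MeasurableSpace E] [BorelSpace E]
    {ν μ : Measure E} [ν.IsAddHaarMeasure] {s : Set E} {f : E → ℝ} (hf : ConvexOn ℝ s f)
    (hμ : μ ≪ ν) (hs : ∀ᵐ x ∂μ, x ∈ s) : AEStronglyMeasurable f μ := by
  have hfrontier : ∀ᵐ x ∂μ, x ∉ frontier s :=
    measure_eq_zero_iff_ae_notMem.1 (hμ (hf.1.addHaar_frontier ν))
  have hinterior : ∀ᵐ x ∂μ, x ∈ interior s := by
    filter_upwards [hs, hfrontier] with x hxs hxf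
    by_contra hx
    exact hxf ⟨subset_closure hxs, hx⟩
  rw [← Measure.restrict_eq_self_of_ae_mem hinterior]
  exact hf.continuousOn_interior.aestronglyMeasurable isOpen_interior.measurableSet

theorem ConcaveOn.aestronglyMeasurable_of_ae_mem {E : Type*} [NormedAddCommGroup E]
    [NormedSpace ℝ E] [FiniteDimensional ℝ E] [MeasurableSpace E] [BorelSpace E]
    {ν μ : Measure E} [ν.IsAddHaarMeasure] {s : Set E} {f : E → ℝ} (hf : ConcaveOn ℝ s f)
    (hμ : μ ≪ ν) (hs : ∀ᵐ x ∂μ, x ∈ s) : AEStronglyMeasurable f μ := by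
  simpa using (hf.neg.aestronglyMeasurable_of_ae_mem hμ hs).neg

theorem ConcaveOn.exists_le_add_mul_sub {S : Set ℝ} {g : ℝ → ℝ} {x : ℝ} (hg : ConcaveOn ℝ S g)
    (hx : x ∈ interior S) : ∃ k, ∀ y ∈ S, g y ≤ g x + k * (y - x) := by
  have hf := hg.neg
  refine ⟨-derivWithin (-g) (Ioi x) x, fun y hy => ?_⟩
  rcases lt_trichotomy y x with hyx | rfl | hxy
  · have hslope := (hf.slope_le_leftDeriv_of_mem_interior hy hx hyx).trans
      (hf.leftDeriv_le_rightDeriv_of_mem_interior hx)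
    rw [slope_def_field, div_le_iff₀ (sub_pos.2 hyx)] at hslope
    simp only [Pi.neg_apply] at hslope
    linarith
  · simp
  · have hslope := hf.rightDeriv_le_slope_of_mem_interior hx hy hxy
    rw [slope_def_field, le_div_iff₀ (sub_pos.2 hxy)] at hslope
    simp only [Pi.neg_apply] at hslope
    linarith

theorem ConcaveOn.le_add_mul_sub_of_mem_segment {S : Set ℝ} {g : ℝ → ℝ} {m k y z : ℝ}
    (hg : ConcaveOn ℝ S g) (hm : m ∈ S) (hy : y ∈ S) (hk : ∀ t ∈ S, g t ≤ g m + k * (t - m))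
    (hz : z ∈ segment ℝ m y) : g y ≤ g z + k * (y - z) := by
  obtain ⟨a, b, ha, hb, hab, rfl⟩ := hz
  have hconc := hg.2 hm hy ha hb hab
  have hky := mul_le_mul_of_nonneg_left (hk y hy) ha
  simp only [smul_eq_mul] at hconc ⊢
  obtain rfl : b = 1 - a := by linarith
  linear_combination hconc + hky

theorem ConcaveOn.integrable_and_integral_comp_le_of_ae_mem_uIcc {α : Type*} [MeasurableSpace α]
    {μ : Measure α} [IsFiniteMeasure μ] {S : Set ℝ} {g : ℝ → ℝ} {u w : α → ℝ} {m k : ℝ}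
    (hg : ConcaveOn ℝ S g) (hm : m ∈ S) (hk : ∀ t ∈ S, g t ≤ g m + k * (t - m))
    (hmem : ∀ᵐ a ∂μ, u a ∈ S ∧ w a ∈ uIcc (u a) m) (hu : Integrable u μ) (hw : Integrable w μ)
    (hgu : Integrable (fun a => g (u a)) μ) (hgw : AEStronglyMeasurable (fun a => g (w a)) μ)
    (huw : ∫ a, u a ∂μ = ∫ a, w a ∂μ) :
    Integrable (fun a => g (w a)) μ ∧ ∫ a, g (u a) ∂μ ≤ ∫ a, g (w a) ∂μ := by
  have hbound : ∀ᵐ a ∂μ,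
      g (u a) - k * (u a - w a) ≤ g (w a) ∧ g (w a) ≤ g m + k * (w a - m) := by
    filter_upwards [hmem] with a ⟨hua, hwa⟩
    rw [← segment_eq_uIcc, segment_symm] at hwa
    refine ⟨?_, hk _ (hg.1.segment_subset hm hua hwa)⟩
    linarith [hg.le_add_mul_sub_of_mem_segment hm hua hk hwa]
  have hdiff : Integrable (fun a => k * (u a - w a)) μ := (hu.sub hw).const_mul k
  have hgw_int : Integrable (fun a => g (w a)) μ :=
    integrable_of_le_of_le hgw (hbound.mono fun a ha => ha.1) (hbound.mono fun a ha => ha.2)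
      (hgu.sub hdiff) ((integrable_const _).add ((hw.sub (integrable_const m)).const_mul k))
  refine ⟨hgw_int, ?_⟩
  calc ∫ a, g (u a) ∂μ ≤ ∫ a, (g (w a) + k * (u a - w a)) ∂μ :=
        integral_mono_ae hgu (hgw_int.add hdiff) (hbound.mono fun a ha => by linarith [ha.1])
    _ = ∫ a, g (w a) ∂μ := by
        rw [integral_add hgw_int hdiff, integral_const_mul, integral_sub hu hw, huw, sub_self,
          mul_zero, add_zero]

theorem ConvexOn.exists_nonpos_left_pos_right {f : ℝ → ℝ} {l r : ℝ}
    (hf : ConvexOn ℝ (Icc l r) f) (hl : f l ≤ 0) :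
    ∃ b, ∀ v ∈ Icc l r, (v < b → f v ≤ 0) ∧ (b < v → 0 < f v) := by
  set S := {v | v ∈ Icc l r ∧ f v ≤ 0}
  have hS : BddAbove S := ⟨r, fun v hv => hv.1.2⟩
  refine ⟨sSup S, fun v hv => ⟨fun hvb => ?_, fun hbv => ?_⟩⟩
  · have hlS : l ∈ S := ⟨left_mem_Icc.2 (hv.1.trans hv.2), hl⟩
    obtain ⟨w, hwS, hvw⟩ := exists_lt_of_lt_csSup ⟨l, hlS⟩ hvb
    have hvseg : v ∈ segment ℝ l w := by
      rw [segment_eq_Icc (hv.1.trans hvw.le)]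
      exact ⟨hv.1, hvw.le⟩
    exact (hf.le_on_segment hlS.1 hwS.1 hvseg).trans (max_le hl hwS.2)
  · by_contra hfv
    exact hbv.not_ge (le_csSup hS ⟨hv, not_lt.1 hfv⟩)

theorem ConvexOn.exists_forall_mem_uIcc {u : ℝ → ℝ} {a Y Q : ℝ} (hu : ConvexOn ℝ (Icc 0 a) u)
    (hY : 0 ≤ Y) (hQ : u 0 ≤ -Q) : ∃ m, ∀ v ∈ Icc 0 a, v * Y - Q ∈ uIcc (u v) m := by
  have hL : ConcaveOn ℝ (Icc 0 a) (fun v => v * Y - Q) :=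
    ((LinearMap.mulRight ℝ Y).concaveOn (convex_Icc 0 a)).add_const (-Q) |>.congr
      fun v _ => by simp [sub_eq_add_neg]
  obtain ⟨b, hb⟩ := (hu.sub hL).exists_nonpos_left_pos_right (by simp only [Pi.sub_apply]; linarith)
  refine ⟨b * Y - Q, fun v hv => ?_⟩
  rcases lt_trichotomy v b with hvb | rfl | hbv
  · have hle := (hb v hv).1 hvb
    simp only [Pi.sub_apply] at hle
    exact mem_uIcc.2 (Or.inl ⟨by linarith, by nlinarith⟩)
  · exact right_mem_uIcc
  · have hlt := (hb v hv).2 hbv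
    simp only [Pi.sub_apply] at hlt
    exact mem_uIcc.2 (Or.inr ⟨by nlinarith, by linarith⟩)

theorem ConcaveOn.aestronglyMeasurable_comp_affine {T : Set ℝ} {g : ℝ → ℝ}
    (hg : ConcaveOn ℝ T g) {μ : Measure ℝ} (hμ : μ ≪ volume) {Y Q : ℝ}
    (hT : ∀ᵐ v ∂μ, v * Y - Q ∈ T) : AEStronglyMeasurable (fun v => g (v * Y - Q)) μ := by
  let L : ℝ →ᵃ[ℝ] ℝ := (LinearMap.mulRight ℝ Y).toAffineMap + AffineMap.const ℝ ℝ (-Q)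
  have hL : ⇑L = fun v => v * Y - Q := funext fun v => by simp [L, sub_eq_add_neg]
  have hcomp := (hg.comp_affineMap L).aestronglyMeasurable_of_ae_mem hμ (by rw [hL]; exact hT)
  rwa [hL] at hcomp

theorem ConcaveOn.integral_comp_le_comp_affine {T : Set ℝ} {g : ℝ → ℝ} (hg : ConcaveOn ℝ T g)
    {μ : Measure ℝ} [IsFiniteMeasure μ] (hμ : μ ≪ volume) {a : ℝ} (hI : ∀ᵐ v ∂μ, v ∈ Icc 0 a)
    {u : ℝ → ℝ} (hu : ConvexOn ℝ (Icc 0 a) u) {Y Q : ℝ} (hY : 0 ≤ Y) (hu0 : u 0 ≤ -Q)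
    (hu_int : Integrable u μ) (hL_int : Integrable (fun v => v * Y - Q) μ)
    (hmean : ∫ v, u v ∂μ = ∫ v, (v * Y - Q) ∂μ) (huT : ∀ᵐ v ∂μ, u v ∈ T)
    (hgu : Integrable (fun v => g (u v)) μ) (hbelow : ∃ᶠ v in ae μ, u v < v * Y - Q)
    (habove : ∃ᶠ v in ae μ, v * Y - Q < u v) :
    (∀ᵐ v ∂μ, v * Y - Q ∈ T) ∧ Integrable (fun v => g (v * Y - Q)) μ ∧
      ∫ v, g (u v) ∂μ ≤ ∫ v, g (v * Y - Q) ∂μ := by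
  set L : ℝ → ℝ := fun v => v * Y - Q
  obtain ⟨m, hm⟩ := hu.exists_forall_mem_uIcc hY hu0
  have hgood : ∀ᵐ v ∂μ, u v ∈ T ∧ L v ∈ uIcc (u v) m := by
    filter_upwards [hI, huT] with v hvI hvT
    exact ⟨hvT, hm v hvI⟩
  obtain ⟨v₁, hv₁, hv₁T, hv₁m⟩ := (hbelow.and_eventually hgood).exists
  obtain ⟨v₂, hv₂, hv₂T, hv₂m⟩ := (habove.and_eventually hgood).exists
  -- `u v₁ < L v₁ ≤ m ≤ L v₂ < u v₂`, as `L` lies between `u` and `m`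
  have hmT : m ∈ interior T := by
    rw [mem_uIcc] at hv₁m hv₂m
    refine mem_interior.2 ⟨Ioo (u v₁) (u v₂), Ioo_subset_Icc_self.trans
      (hg.1.ordConnected.out hv₁T hv₂T), isOpen_Ioo, ?_, ?_⟩
    · rcases hv₁m with hv | hv <;> linarith
    · rcases hv₂m with hv | hv <;> linarith
  obtain ⟨k, hk⟩ := hg.exists_le_add_mul_sub hmT
  have hLT : ∀ᵐ v ∂μ, L v ∈ T := hgood.mono fun v hv =>
    hg.1.segment_subset hv.1 (interior_subset hmT) (by rw [segment_eq_uIcc]; exact hv.2)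
  exact ⟨hLT, hg.integrable_and_integral_comp_le_of_ae_mem_uIcc (interior_subset hmT) hk hgood
    hu_int hL_int hgu (hg.aestronglyMeasurable_comp_affine hμ hLT) hmean⟩

theorem ConvexOn.subsingleton_setOf_eq_of_left_lt {u : ℝ → ℝ} {l r y : ℝ}
    (hu : ConvexOn ℝ (Icc l r) u) (hy : u l < y) : {v | v ∈ Icc l r ∧ u v = y}.Subsingleton := by
  have hne : ∀ v w, v ∈ Icc l r ∧ u v = y → w ∈ Icc l r ∧ u w = y → ¬v < w := by
    rintro v w ⟨hv, rfl⟩ ⟨hw, hwv⟩ hvw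
    rcases hv.1.eq_or_lt with rfl | hlv
    · exact hy.ne rfl
    · have hvseg : v ∈ openSegment ℝ l w := by
        rw [openSegment_eq_Ioo (hlv.trans hvw)]
        exact ⟨hlv, hvw⟩
      exact (hu.lt_right_of_left_lt (left_mem_Icc.2 (hv.1.trans hv.2)) hw hvseg hy).ne hwv.symm
  intro v hv w hw
  rcases lt_trichotomy v w with hvw | hvw | hwv
  exacts [(hne v w hv hw hvw).elim, hvw, (hne w v hw hv hwv).elim]

theorem ConvexOn.ae_eq_left_of_ae_mem_finite {μ : Measure ℝ} (hμ : μ ≪ volume)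
    {u : ℝ → ℝ} {l r : ℝ} (hI : ∀ᵐ v ∂μ, v ∈ Icc l r) (hu : ConvexOn ℝ (Icc l r) u)
    (hmin : ∀ v ∈ Icc l r, u l ≤ u v) {F : Set ℝ} (hF : F.Finite) (huF : ∀ᵐ v ∂μ, u v ∈ F) :
    u =ᵐ[μ] fun _ => u l := by
  have hlevel : ∀ y ∈ F, ∀ᵐ v ∂μ, u l < y → ¬(v ∈ Icc l r ∧ u v = y) := by
    intro y _
    by_cases hy : u l < y
    · exact (measure_eq_zero_iff_ae_notMem.1
        (hμ ((hu.subsingleton_setOf_eq_of_left_lt hy).measure_zero volume))).mono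
        fun v hv _ => hv
    · exact ae_of_all _ fun v hly => absurd hly hy
  filter_upwards [hI, huF, hF.eventually_all.2 hlevel] with v hv hvF hlev
  exact le_antisymm (not_lt.1 fun hlt => hlev _ hvF hlt ⟨hv, rfl⟩) (hmin v hv)

section Mechanism

variable {I : Set ℝ} {x p : ℝ → ℝ}

theorem convexOn_utility_of_IC (hI : Convex ℝ I)
    (hIC : ∀ v ∈ I, ∀ v' ∈ I, v * x v' - p v' ≤ v * x v - p v) :
    ConvexOn ℝ I (fun v => v * x v - p v) := by
  refine ⟨hI, fun v₁ h₁ v₂ h₂ a b ha hb hab => ?_⟩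
  have hV : a • v₁ + b • v₂ ∈ I := hI h₁ h₂ ha hb hab
  have e₁ := mul_le_mul_of_nonneg_left (hIC v₁ h₁ _ hV) ha
  have e₂ := mul_le_mul_of_nonneg_left (hIC v₂ h₂ _ hV) hb
  simp only [smul_eq_mul] at e₁ e₂ ⊢
  linear_combination e₁ + e₂ + p (a * v₁ + b * v₂) * hab

theorem neg_le_utility_of_IC (h0 : 0 ∈ I) (hx0 : 0 ≤ x 0)
    (hIC : ∀ v ∈ I, ∀ v' ∈ I, v * x v' - p v' ≤ v * x v - p v) {v : ℝ} (hv : v ∈ I)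
    (hv0 : 0 ≤ v) : -p 0 ≤ v * x v - p v := by
  nlinarith [hIC v hv 0 h0]

theorem utility_le_sub_of_IC (h0 : 0 ∈ I)
    (hIC : ∀ v ∈ I, ∀ v' ∈ I, v * x v' - p v' ≤ v * x v - p v) {v : ℝ} (hv : v ∈ I)
    (hv0 : 0 ≤ v) (hx1 : x v ≤ 1) : v * x v - p v ≤ v - p 0 := by
  nlinarith [hIC 0 h0 v hv, mul_le_mul_of_nonneg_left hx1 hv0]

end Mechanism

namespace Stmt8

theorem eExp_congr {μ : Measure ℝ} {φ ψ : ℝ → EReal} (hφψ : φ =ᵐ[μ] ψ) :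
    eExp μ φ = eExp μ ψ := by
  have hfin : (∀ᵐ v ∂μ, ⊥ < φ v ∧ φ v < ⊤) ↔ (∀ᵐ v ∂μ, ⊥ < ψ v ∧ ψ v < ⊤) :=
    Filter.eventually_congr (hφψ.mono fun v hv => by rw [hv])
  have hreal : (fun v => (φ v).toReal) =ᵐ[μ] fun v => (ψ v).toReal :=
    hφψ.mono fun v hv => by simp only [hv]
  rw [eExp, eExp, hfin, integrable_congr hreal, integral_congr_ae hreal]

variable {h : ℝ → EReal}

theorem EConcave.eq_top_of_mem_openSegment (hconc : EConcave h) {t₀ t s : ℝ} (ht₀ : h t₀ = ⊤)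
    (ht : h t ≠ ⊥) (hs : s ∈ openSegment ℝ t₀ t) : h s = ⊤ := by
  obtain ⟨a, b, ha, hb, hab, rfl⟩ := hs
  have hbt : (b : EReal) * h t ≠ ⊥ := by
    rw [Ne, EReal.mul_eq_bot]
    simp [ht, hb, not_lt.2 hb.le]
  have hconv := hconc t₀ t a b ha.le hb.le hab
  rw [ht₀, EReal.coe_mul_top_of_pos ha, EReal.top_add_of_ne_bot hbt, top_le_iff] at hconv
  simpa only [smul_eq_mul] using hconv

theorem EConcave.finite_setOf_ne_bot_ne_top (hconc : EConcave h) {t₀ : ℝ} (ht₀ : h t₀ = ⊤) :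
    {t | h t ≠ ⊥ ∧ h t ≠ ⊤}.Finite := by
  set S := {t | h t ≠ ⊥ ∧ h t ≠ ⊤}
  have hfar : ∀ t ∈ S, ∀ s ∈ S, s ∉ openSegment ℝ t₀ t := fun t ht s hs hseg =>
    hs.2 (hconc.eq_top_of_mem_openSegment ht₀ ht.1 hseg)
  have hleft : (S ∩ Iio t₀).Subsingleton := by
    rintro t ⟨ht, ht₀'⟩ s ⟨hs, hs₀⟩
    by_contra hne
    rcases lt_or_gt_of_ne hne with hts | hst
    · refine hfar t ht s hs ?_
      rw [openSegment_symm, openSegment_eq_Ioo (hts.trans hs₀)]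
      exact ⟨hts, hs₀⟩
    · refine hfar s hs t ht ?_
      rw [openSegment_symm, openSegment_eq_Ioo (hst.trans ht₀')]
      exact ⟨hst, ht₀'⟩
  have hright : (S ∩ Ioi t₀).Subsingleton := by
    rintro t ⟨ht, ht₀'⟩ s ⟨hs, hs₀⟩
    by_contra hne
    rcases lt_or_gt_of_ne hne with hts | hst
    · refine hfar s hs t ht ?_
      rw [openSegment_eq_Ioo (ht₀'.trans hts)]
      exact ⟨ht₀', hts⟩
    · refine hfar t ht s hs ?_
      rw [openSegment_eq_Ioo (hs₀.trans hst)]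
      exact ⟨hs₀, hst⟩
  refine (hleft.finite.union hright.finite).subset fun t ht => ?_
  rcases lt_trichotomy t t₀ with htt | rfl | htt
  · exact Or.inl ⟨ht, htt⟩
  · exact absurd ht₀ ht.2
  · exact Or.inr ⟨ht, htt⟩

theorem EConcave.concaveOn_toReal (hconc : EConcave h) (htop : ∀ t, h t ≠ ⊤) :
    ConcaveOn ℝ {t | h t ≠ ⊥} (fun t => (h t).toReal) := by
  have hcoe : ∀ t, h t ≠ ⊥ → h t = ((h t).toReal : EReal) := fun t ht =>
    (EReal.coe_toReal (htop t) ht).symm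
  have hcomb : ∀ t₁, h t₁ ≠ ⊥ → ∀ t₂, h t₂ ≠ ⊥ → ∀ a b : ℝ, 0 ≤ a → 0 ≤ b → a + b = 1 →
      h (a * t₁ + b * t₂) ≠ ⊥ ∧
        a * (h t₁).toReal + b * (h t₂).toReal ≤ (h (a * t₁ + b * t₂)).toReal := by
    intro t₁ h₁ t₂ h₂ a b ha hb hab
    have hconv := hconc t₁ t₂ a b ha hb hab
    rw [hcoe t₁ h₁, hcoe t₂ h₂, ← EReal.coe_mul, ← EReal.coe_mul, ← EReal.coe_add] at hconv
    have hne : h (a * t₁ + b * t₂) ≠ ⊥ := ne_bot_of_le_ne_bot (EReal.coe_ne_bot _) hconv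
    rw [hcoe _ hne, EReal.coe_le_coe_iff] at hconv
    exact ⟨hne, hconv⟩
  refine ⟨fun t₁ h₁ t₂ h₂ a b ha hb hab => ?_, fun t₁ h₁ t₂ h₂ a b ha hb hab => ?_⟩
  · exact (hcomb t₁ h₁ t₂ h₂ a b ha hb hab).1
  · simpa only [smul_eq_mul] using (hcomb t₁ h₁ t₂ h₂ a b ha hb hab).2

theorem eExp_comp_le_comp_affine (hconc : EConcave h) {μ : Measure ℝ} [IsFiniteMeasure μ]
    (hμ : μ ≪ volume) {a : ℝ} (hI : ∀ᵐ v ∂μ, v ∈ Icc 0 a) {u : ℝ → ℝ}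
    (hu : ConvexOn ℝ (Icc 0 a) u) (hmin : ∀ v ∈ Icc 0 a, u 0 ≤ u v) (hu_int : Integrable u μ)
    {Y Q : ℝ} (hY : 0 ≤ Y) (hu0 : u 0 = -Q) (hL_int : Integrable (fun v => v * Y - Q) μ)
    (hmean : ∫ v, u v ∂μ = ∫ v, (v * Y - Q) ∂μ) :
    eExp μ (fun v => h (u v)) ≤ eExp μ (fun v => h (v * Y - Q)) := by
  set L : ℝ → ℝ := fun v => v * Y - Q
  by_cases hfin : (∀ᵐ v ∂μ, ⊥ < h (u v) ∧ h (u v) < ⊤) ∧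
      Integrable (fun v => (h (u v)).toReal) μ
  swap
  · rw [eExp, if_neg hfin]
    exact bot_le
  have hcongr (he : u =ᵐ[μ] L) : eExp μ (fun v => h (u v)) ≤ eExp μ (fun v => h (L v)) :=
    (eExp_congr (he.mono fun v hv => by simp only [hv])).le
  by_cases hle : u ≤ᵐ[μ] L
  · exact hcongr ((integral_eq_iff_of_ae_le hu_int hL_int hle).1 hmean)
  by_cases hge : L ≤ᵐ[μ] u
  · exact hcongr ((integral_eq_iff_of_ae_le hL_int hu_int hge).1 hmean.symm).symm
  -- a value `⊤` would leave `h` finitely many finite values, making `u` a.e. equal to `u 0 ≤ L`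
  have htop : ∀ t, h t ≠ ⊤ := by
    intro t ht
    refine hle ?_
    filter_upwards [hu.ae_eq_left_of_ae_mem_finite hμ hI hmin
      (hconc.finite_setOf_ne_bot_ne_top ht) (hfin.1.mono fun v hv => ⟨hv.1.ne', hv.2.ne⟩), hI]
      with v hv hvI
    rw [hv, hu0]
    nlinarith [hvI.1]
  obtain ⟨hLT, hgL_int, hint_le⟩ := (hconc.concaveOn_toReal htop).integral_comp_le_comp_affine
    hμ hI hu hY hu0.le hu_int hL_int hmean (hfin.1.mono fun v hv => hv.1.ne') hfin.2
    ((Filter.not_eventually.1 hge).mono fun v hv => not_le.1 hv)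
    ((Filter.not_eventually.1 hle).mono fun v hv => not_le.1 hv)
  have hfinL : ∀ᵐ v ∂μ, ⊥ < h (L v) ∧ h (L v) < ⊤ :=
    hLT.mono fun v hv => ⟨bot_lt_iff_ne_bot.2 hv, lt_top_iff_ne_top.2 (htop _)⟩
  rw [eExp, eExp, if_pos hfin, if_pos ⟨hfinL, hgL_int⟩]
  exact EReal.coe_le_coe_iff.2 hint_le

end Stmt8

open Stmt8 in
theorem stmt_8_general (h : ℝ → EReal) (hconc : EConcave h)
    (hbar : ℝ) (hbar0 : 0 ≤ hbar)
    (f : ℝ → ℝ)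
    (hfsupp : ∀ v, v ∉ Set.Icc 0 hbar → f v = 0)
    (μ : Measure ℝ)
    (hμ : μ = MeasureTheory.volume.withDensity (fun v => ENNReal.ofReal (f v)))
    (hprob : IsProbabilityMeasure μ)
    (hmean : 0 < ∫ v, v ∂μ)
    (x p : ℝ → ℝ)
    (hx : ∀ v, x v ∈ Set.Icc (0 : ℝ) 1)
    (hIC : ∀ v ∈ Set.Icc 0 hbar, ∀ v' ∈ Set.Icc 0 hbar,
        v * x v' - p v' ≤ v * x v - p v)
    (c : ℝ) (hc : c = ∫ v, (v * x v - p v) ∂μ)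
    (Y Q : ℝ) (hY : Y = (c + p 0) / ∫ v, v ∂μ) (hQ : Q = p 0) :
    0 ≤ Y ∧ Y ≤ 1
    ∧ (∫ v, (v * Y - Q) ∂μ) = c
    ∧ eExp μ (fun v => h (v * x v - p v)) ≤ eExp μ (fun v => h (v * Y - Q)) := by
  have hμac : μ ≪ volume := hμ ▸ withDensity_absolutelyContinuous _ _
  have hI : ∀ᵐ v ∂μ, v ∈ Icc 0 hbar :=
    hμ ▸ ae_mem_of_withDensity_ofReal measurableSet_Icc hfsupp
  have h0 : (0 : ℝ) ∈ Icc 0 hbar := ⟨le_rfl, hbar0⟩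
  have hconv := convexOn_utility_of_IC (convex_Icc 0 hbar) hIC
  have hlow : ∀ v ∈ Icc 0 hbar, -p 0 ≤ v * x v - p v := fun v hv =>
    neg_le_utility_of_IC h0 (hx 0).1 hIC hv hv.1
  have hupp : ∀ v ∈ Icc 0 hbar, v * x v - p v ≤ v - p 0 := fun v hv =>
    utility_le_sub_of_IC h0 hIC hv hv.1 (hx v).2
  have hid : Integrable (fun v : ℝ => v) μ :=
    Integrable.of_bound aestronglyMeasurable_id hbar <| hI.mono fun v hv => by
      rw [Real.norm_eq_abs, abs_le]
      exact ⟨by linarith [hv.1], hv.2⟩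
  have hu_int : Integrable (fun v => v * x v - p v) μ :=
    integrable_of_le_of_le (hconv.aestronglyMeasurable_of_ae_mem hμac hI) (hI.mono hlow)
      (hI.mono hupp) (integrable_const _) (hid.sub (integrable_const _))
  have hc_low : -p 0 ≤ c := by
    simpa [hc] using integral_mono_ae (integrable_const _) hu_int (hI.mono hlow)
  have hc_upp : c ≤ (∫ v, v ∂μ) - p 0 := by
    simpa [hc, integral_sub hid (integrable_const _)] using
      integral_mono_ae hu_int (hid.sub (integrable_const _)) (hI.mono hupp)
  have hY0 : 0 ≤ Y := hY ▸ div_nonneg (by linarith) hmean.le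
  have hmeanL : ∫ v, (v * Y - Q) ∂μ = c := by
    rw [integral_sub (hid.mul_const Y) (integrable_const Q), integral_mul_const, integral_const,
      hY, hQ]
    field_simp
    simp
  refine ⟨hY0, hY ▸ (div_le_one hmean).2 (by linarith), hmeanL, ?_⟩
  exact eExp_comp_le_comp_affine hconc hμac hI hconv (by simpa using hlow) hu_int hY0
    (by simp [hQ]) ((hid.mul_const Y).sub (integrable_const Q)) (hc.symm.trans hmeanL.symm)

open Stmt8 in
/-- **Core of Lemma 3.10** (a constant mechanism with the same expected utility
dominates in terms of any concave tradeoff objective). -/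
theorem stmt_8 (h : ℝ → EReal) (hconc : EConcave h)
    (hbar : ℝ) (hbar0 : 0 ≤ hbar)
    (f : ℝ → ℝ) (hf : ∀ v, 0 ≤ f v)
    (hfsupp : ∀ v, v ∉ Set.Icc 0 hbar → f v = 0)
    (μ : Measure ℝ)
    (hμ : μ = MeasureTheory.volume.withDensity (fun v => ENNReal.ofReal (f v)))
    (hprob : IsProbabilityMeasure μ)
    (hmean : 0 < ∫ v, v ∂μ)
    (x p : ℝ → ℝ)
    (hx : ∀ v, x v ∈ Set.Icc (0 : ℝ) 1)
    (hIC : ∀ v ∈ Set.Icc 0 hbar, ∀ v' ∈ Set.Icc 0 hbar,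
        v * x v' - p v' ≤ v * x v - p v)
    (c : ℝ) (hc : c = ∫ v, (v * x v - p v) ∂μ)
    (Y Q : ℝ) (hY : Y = (c + p 0) / ∫ v, v ∂μ) (hQ : Q = p 0) :
    0 ≤ Y ∧ Y ≤ 1
    ∧ (∫ v, (v * Y - Q) ∂μ) = c
    ∧ eExp μ (fun v => h (v * x v - p v)) ≤ eExp μ (fun v => h (v * Y - Q)) :=
  stmt_8_general h hconc hbar hbar0 f hfsupp μ hμ hprob hmean x p hx hIC c hc Y Q hY hQ
end

section
/- Structure of utility-constrained surplus maximization (Lemma A.1): Let f be a density on [l, h̄] with l ≥ 0, and for c ≥ 0 let g(c) be the value of the utility-constrained surplus problem. Then: (i) if c ≥ E[v], then g(c) = E[v], attained by allocating the item to all types (x ≡ 1) with a constant payment making the expected utility at most c; (ii) if 0 ≤ c < E[v], the optimum is attained by a randomization over at most two posted prices p_1 ≤ p_2, i.e., an allocation with x(v) = 0 for v < p_1, x(v) = α ∈ [0,1] for p_1 ≤ v < p_2, and x(v) = 1 for v ≥ p_2, whose expected utility is exactly c; moreover, if the function S_U (the surplus of the posted price giving expected utility c) is concave, the optimum is a single posted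 price; (iii) in either case there is an optimal solution attaining the utility bound with equality; and (iv) g is a concave function of c. -/
/-!
Incentive compatibility on `[l, hb]` makes the allocation `x` monotone and the utility
`U v = v x v - p v` convex with subgradient `x`, so `U v ≥ U l + ∫ₗᵛ x` (Riemann sums).
Writing the monotone allocation as `x v = |{s ∈ (0,1) : s < x v}|` (layer cake), the
mechanism has exactly the surplus of the uniform randomization over the posted prices
`r s = inf {t : s < x t}`, and by the envelope bound at least its utility.

Hence for every multiplier `η ≥ 0` the surplus of a feasible mechanism is at most
`M η + η c`, where `M η = max_ρ (S ρ - η u ρ)`. For `0 < c ≤ E[v]` take `η` minimizing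
`M η + η c`; maximizers of `S - η' u` for `η' ↓ η` and `η' ↑ η` accumulate at two maximizers
`r₁, r₂` of `S - η u` with `u r₂ ≤ c ≤ u r₁`, and the mixture of these posted prices with
utility exactly `c` attains the bound. For `c = 0` the randomization has `u (r s) = 0`, hence
`S (r s) = 0`, for almost every `s`. If `S_U` is concave, Jensen's inequality replaces the two
prices by the single price `p(c)`, because `S q ≤ S (p (u q))` (`u` is injective where it is
positive). Mixing optimal mechanisms with utilities exactly `c₁` and `c₂` shows that `g` is
concave.
-/

open MeasureTheory

namespace Stmt13

/-- Feasibility for the utility-constrained surplus problem: allocation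
probabilities, incentive compatibility and individual rationality on the
support, and expected utility at most `c`. -/
def Feas (μ : Measure ℝ) (l hb c : ℝ) (x p : ℝ → ℝ) : Prop :=
  (∀ v, x v ∈ Set.Icc (0 : ℝ) 1) ∧
  (∀ v ∈ Set.Icc l hb, ∀ v' ∈ Set.Icc l hb, v * x v' - p v' ≤ v * x v - p v) ∧
  (∀ v ∈ Set.Icc l hb, 0 ≤ v * x v - p v) ∧
  (∫ v, (v * x v - p v) ∂μ) ≤ c

/-- The utility-constrained surplus function `g(c)`. -/
noncomputable def gVal (μ : Measure ℝ) (l hb : ℝ) (c : ℝ) : ℝ :=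
  sSup {s : ℝ | ∃ x p : ℝ → ℝ, Feas μ l hb c x p ∧ s = ∫ v, v * x v ∂μ}

/-- Allocation of a randomization over the two posted prices `p₁ ≤ p₂`, buying
at `p₁` with probability `α` and at `p₂` with probability `1 - α`. -/
noncomputable def stepX (p₁ p₂ α : ℝ) : ℝ → ℝ :=
  fun v => if v < p₁ then 0 else if v < p₂ then α else 1

/-- Payment rule of the randomization over the two posted prices `p₁ ≤ p₂`. -/
noncomputable def stepP (p₁ p₂ α : ℝ) : ℝ → ℝ :=
  fun v => if v < p₁ then 0 else if v < p₂ then α * p₁ else α * p₁ + (1 - α) * p₂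

/-- Expected utility of posting the price `r`. -/
noncomputable def uPrice (μ : Measure ℝ) (r : ℝ) : ℝ :=
  ∫ v, max (v - r) 0 ∂μ

/-- Expected surplus of posting the price `r`. -/
noncomputable def sPrice (μ : Measure ℝ) (r : ℝ) : ℝ :=
  ∫ v, (if r ≤ v then v else 0) ∂μ

end Stmt13

open Filter Topology Set

namespace Stmt13

section StepMechanism

variable {p₁ p₂ α : ℝ}

lemma stepX_mem_Icc (hα : α ∈ Icc (0 : ℝ) 1) (v : ℝ) : stepX p₁ p₂ α v ∈ Icc (0 : ℝ) 1 := by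
  unfold stepX
  split_ifs
  exacts [⟨le_rfl, zero_le_one⟩, hα, ⟨zero_le_one, le_rfl⟩]

lemma step_utility_eq (hp : p₁ ≤ p₂) (v : ℝ) :
    v * stepX p₁ p₂ α v - stepP p₁ p₂ α v = α * max (v - p₁) 0 + (1 - α) * max (v - p₂) 0 := by
  unfold stepX stepP
  split_ifs with h₁ h₂
  · rw [max_eq_right (by linarith), max_eq_right (by linarith)]; ring
  · rw [max_eq_left (by linarith), max_eq_right (by linarith)]; ring
  · rw [max_eq_left (by linarith), max_eq_left (by linarith)]; ring

lemma step_surplus_eq (hp : p₁ ≤ p₂) (v : ℝ) :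
    v * stepX p₁ p₂ α v = α * (if p₁ ≤ v then v else 0) + (1 - α) * (if p₂ ≤ v then v else 0) := by
  unfold stepX
  split_ifs <;> first | (exfalso; linarith) | ring

lemma step_IC (hp : p₁ ≤ p₂) (hα : α ∈ Icc (0 : ℝ) 1) (v v' : ℝ) :
    v * stepX p₁ p₂ α v' - stepP p₁ p₂ α v' ≤ v * stepX p₁ p₂ α v - stepP p₁ p₂ α v := by
  rw [step_utility_eq hp v]
  have h₁ := mul_le_mul_of_nonneg_left (le_max_left (v - p₁) 0) hα.1
  have h₁' := mul_nonneg hα.1 (le_max_right (v - p₁) 0)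
  have h₂ := mul_le_mul_of_nonneg_left (le_max_left (v - p₂) 0) (sub_nonneg.2 hα.2)
  have h₂' := mul_nonneg (sub_nonneg.2 hα.2) (le_max_right (v - p₂) 0)
  unfold stepX stepP
  split_ifs <;> linarith

lemma step_IR (hp : p₁ ≤ p₂) (hα : α ∈ Icc (0 : ℝ) 1) (v : ℝ) :
    0 ≤ v * stepX p₁ p₂ α v - stepP p₁ p₂ α v := by
  rw [step_utility_eq hp v]
  exact add_nonneg (mul_nonneg hα.1 (le_max_right _ _))
    (mul_nonneg (sub_nonneg.2 hα.2) (le_max_right _ _))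

end StepMechanism

section IncentiveCompatibility

variable {s : Set ℝ} {x p : ℝ → ℝ}

lemma sub_mul_le_utility_sub (hIC : ∀ v ∈ s, ∀ v' ∈ s, v * x v' - p v' ≤ v * x v - p v)
    {a b : ℝ} (ha : a ∈ s) (hb : b ∈ s) : (b - a) * x a ≤ (b * x b - p b) - (a * x a - p a) := by
  linarith [hIC b hb a ha]

lemma monotoneOn_of_IC (hIC : ∀ v ∈ s, ∀ v' ∈ s, v * x v' - p v' ≤ v * x v - p v) :
    MonotoneOn x s := fun a ha b hb hab => by
  rcases hab.eq_or_lt with rfl | hlt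
  · rfl
  · nlinarith [sub_mul_le_utility_sub hIC ha hb, sub_mul_le_utility_sub hIC hb ha]

lemma monotoneOn_utility_of_IC (hIC : ∀ v ∈ s, ∀ v' ∈ s, v * x v' - p v' ≤ v * x v - p v)
    (hx : ∀ v, 0 ≤ x v) : MonotoneOn (fun v => v * x v - p v) s := fun a ha b hb hab => by
  nlinarith [sub_mul_le_utility_sub hIC ha hb, hx a]

end IncentiveCompatibility

lemma integral_le_sub_add_of_subgradient {g U : ℝ → ℝ} {a b : ℝ} (hab : a ≤ b)
    (hg : MonotoneOn g (Icc a b))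
    (hsub : ∀ x ∈ Icc a b, ∀ y ∈ Icc a b, x ≤ y → (y - x) * g x ≤ U y - U x)
    {n : ℕ} (hn : 0 < n) :
    ∫ t in a..b, g t ≤ U b - U a + (b - a) / n * (g b - g a) := by
  set δ := (b - a) / n
  set t : ℕ → ℝ := fun i => a + i * δ
  have hδ : 0 ≤ δ := div_nonneg (sub_nonneg.2 hab) n.cast_nonneg
  have ht_succ (i : ℕ) : t (i + 1) = t i + δ := by simp only [t]; push_cast; ring
  have ht_mem {i : ℕ} (hi : i ≤ n) : t i ∈ Icc a b := by
    have : (i : ℝ) * δ ≤ n * δ := mul_le_mul_of_nonneg_right (by exact_mod_cast hi) hδ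
    have hn' : (n : ℝ) * δ = b - a := by simp only [δ]; field_simp
    exact ⟨by simp only [t]; nlinarith [i.cast_nonneg (α := ℝ)], by simp only [t]; linarith⟩
  have ht0 : t 0 = a := by simp [t]
  have htn : t n = b := by simp only [t, δ]; field_simp; ring
  have hint {i : ℕ} (hi : i < n) : IntervalIntegrable g volume (t i) (t (i + 1)) := by
    refine MonotoneOn.intervalIntegrable ?_
    rw [uIcc_of_le (by rw [ht_succ]; linarith)]
    exact hg.mono (Icc_subset_Icc (ht_mem hi.le).1 (ht_mem hi).2)
  have hpiece : ∀ i ∈ Finset.range n, ∫ s in t i..t (i + 1), g s ≤ δ * g (t (i + 1)) := by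
    intro i hi
    have hi := Finset.mem_range.1 hi
    have hsub : Icc (t i) (t (i + 1)) ⊆ Icc a b :=
      Icc_subset_Icc (ht_mem hi.le).1 (ht_mem hi).2
    calc ∫ s in t i..t (i + 1), g s ≤ ∫ _ in t i..t (i + 1), g (t (i + 1)) :=
          intervalIntegral.integral_mono_on (by rw [ht_succ]; linarith)
            (hint hi) intervalIntegrable_const
            fun s hs => hg (hsub hs) (hsub (right_mem_Icc.2 (by rw [ht_succ]; linarith))) hs.2
      _ = δ * g (t (i + 1)) := by simp [ht_succ]
  have hstep : ∀ i ∈ Finset.range n, δ * g (t i) ≤ U (t (i + 1)) - U (t i) := by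
    intro i hi
    have hi := Finset.mem_range.1 hi
    simpa [ht_succ] using hsub _ (ht_mem hi.le) _ (ht_mem hi) (by rw [ht_succ]; linarith)
  calc ∫ s in a..b, g s = ∑ i ∈ Finset.range n, ∫ s in t i..t (i + 1), g s := by
        rw [intervalIntegral.sum_integral_adjacent_intervals, ht0, htn]
        exact fun i hi => hint hi
    _ ≤ ∑ i ∈ Finset.range n, δ * g (t (i + 1)) := Finset.sum_le_sum hpiece
    _ = ∑ i ∈ Finset.range n, δ * g (t i) + δ * (g b - g a) := by
        rw [← ht0, ← htn, mul_sub, ← Finset.sum_range_sub (fun i => δ * g (t i)),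
          ← Finset.sum_add_distrib]
        simp
    _ ≤ ∑ i ∈ Finset.range n, (U (t (i + 1)) - U (t i)) + δ * (g b - g a) := by
        gcongr with i hi
        exact hstep i hi
    _ = U b - U a + δ * (g b - g a) := by
        rw [Finset.sum_range_sub (fun i => U (t i)), htn, ht0]

lemma integral_le_sub_of_subgradient {g U : ℝ → ℝ} {a b : ℝ} (hab : a ≤ b)
    (hg : MonotoneOn g (Icc a b))
    (hsub : ∀ x ∈ Icc a b, ∀ y ∈ Icc a b, x ≤ y → (y - x) * g x ≤ U y - U x) :
    ∫ t in a..b, g t ≤ U b - U a := by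
  have hlim : Tendsto (fun n : ℕ => U b - U a + (b - a) / n * (g b - g a)) atTop
      (𝓝 (U b - U a)) := by
    simpa using ((tendsto_const_div_atTop_nhds_zero_nat (b - a)).mul_const (g b - g a)).const_add
      (U b - U a)
  exact ge_of_tendsto hlim ((eventually_gt_atTop 0).mono fun n hn =>
    integral_le_sub_add_of_subgradient hab hg hsub hn)

lemma integral_mul_eq_integral_setIntegral_lt {α : Type*} [MeasurableSpace α] {ν : Measure α}
    [IsFiniteMeasure ν] {g χ : α → ℝ} (hg : Integrable g ν) (hχ : Measurable χ)
    (hχ01 : ∀ v, χ v ∈ Icc (0 : ℝ) 1) :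
    ∫ v, g v * χ v ∂ν = ∫ s in Ioo (0 : ℝ) 1, ∫ v in {v | s < χ v}, g v ∂ν := by
  set F : α → ℝ → ℝ := fun v s => {z : α × ℝ | z.2 < χ z.1}.indicator (fun z => g z.1) (v, s)
  have hF : Integrable (Function.uncurry F) (ν.prod (volume.restrict (Ioo (0 : ℝ) 1))) :=
    (hg.comp_fst _).indicator (measurableSet_lt measurable_snd (hχ.comp measurable_fst))
  have hF_v (v : α) : ∫ s in Ioo (0 : ℝ) 1, F v s = g v * χ v := by
    have : (fun s => F v s) = (Iio (χ v)).indicator fun _ => g v := by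
      ext s; simp [F, indicator]
    rw [this, integral_indicator measurableSet_Iio, Measure.restrict_restrict measurableSet_Iio,
      setIntegral_const, Iio_inter_Ioo, min_eq_left (hχ01 v).2,
      Real.volume_real_Ioo_of_le (hχ01 v).1, sub_zero, smul_eq_mul, mul_comm]
  have hF_s (s : ℝ) : ∫ v, F v s ∂ν = ∫ v in {v | s < χ v}, g v ∂ν := by
    rw [← integral_indicator (measurableSet_lt measurable_const hχ)]
    rfl
  simp_rw [← hF_v, integral_integral_swap hF, hF_s]

lemma uPrice_nonneg (μ : Measure ℝ) (r : ℝ) : 0 ≤ uPrice μ r :=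
  integral_nonneg fun _ => le_max_right _ _

lemma uPrice_eq_zero_of_ae_le {μ : Measure ℝ} {r : ℝ} (h : ∀ᵐ v ∂μ, v ≤ r) : uPrice μ r = 0 :=
  integral_eq_zero_of_ae (h.mono fun _ hv => max_eq_right (sub_nonpos.2 hv))

lemma sPrice_eq_zero_of_ae_le {μ : Measure ℝ} [NullSingletonClass μ] {r : ℝ}
    (h : ∀ᵐ v ∂μ, v ≤ r) : sPrice μ r = 0 :=
  integral_eq_zero_of_ae <| (h.and (Measure.ae_ne μ r)).mono fun _ hv =>
    if_neg (not_le.2 (lt_of_le_of_ne hv.1 hv.2))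

lemma sPrice_eq_setIntegral (μ : Measure ℝ) (r : ℝ) : sPrice μ r = ∫ v in Ici r, v ∂μ := by
  rw [← integral_indicator measurableSet_Ici]; rfl

structure IsValueDist (μ : Measure ℝ) (l hb : ℝ) : Prop where
  nonneg : 0 ≤ l
  le : l ≤ hb
  ae_mem : ∀ᵐ v ∂μ, v ∈ Icc l hb

namespace IsValueDist

variable {μ : Measure ℝ} {l hb : ℝ} (hV : IsValueDist μ l hb)
include hV

lemma ae_nonneg : ∀ᵐ v ∂μ, 0 ≤ v := hV.ae_mem.mono fun _ hv => hV.nonneg.trans hv.1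

lemma restrict_eq : μ.restrict (Icc l hb) = μ := Measure.restrict_eq_self_of_ae_mem hV.ae_mem

lemma uPrice_zero : uPrice μ 0 = ∫ v, v ∂μ :=
  integral_congr_ae <| hV.ae_nonneg.mono fun v hv => by simpa using hv

lemma uPrice_right : uPrice μ hb = 0 :=
  uPrice_eq_zero_of_ae_le (hV.ae_mem.mono fun _ hv => hv.2)

lemma sPrice_nonneg (r : ℝ) : 0 ≤ sPrice μ r :=
  integral_nonneg_of_ae <| hV.ae_nonneg.mono fun v hv => by
    show 0 ≤ ite _ _ _
    split_ifs <;> linarith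

lemma sPrice_zero : sPrice μ 0 = ∫ v, v ∂μ :=
  integral_congr_ae <| hV.ae_nonneg.mono fun _ hv => if_pos hv

lemma sPrice_right [NullSingletonClass μ] : sPrice μ hb = 0 :=
  sPrice_eq_zero_of_ae_le (hV.ae_mem.mono fun _ hv => hv.2)

variable [IsProbabilityMeasure μ]

lemma integrable_of_monotoneOn {f : ℝ → ℝ} (hf : MonotoneOn f (Icc l hb)) : Integrable f μ := by
  simpa [IntegrableOn, hV.restrict_eq] using
    hf.integrableOn_isCompact (μ := μ) (isCompact_Icc (a := l) (b := hb))

lemma integrable_of_continuous {f : ℝ → ℝ} (hf : Continuous f) : Integrable f μ := by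
  simpa [IntegrableOn, hV.restrict_eq] using
    hf.continuousOn.integrableOn_compact (μ := μ) (isCompact_Icc (a := l) (b := hb))

lemma integrable_id : Integrable (fun v : ℝ => v) μ :=
  hV.integrable_of_continuous continuous_id

lemma integrable_posPart_sub (r : ℝ) : Integrable (fun v => max (v - r) 0) μ :=
  hV.integrable_of_continuous (by fun_prop)

lemma integrable_surplus_price (r : ℝ) : Integrable (fun v => if r ≤ v then v else 0) μ := by
  refine hV.integrable_of_monotoneOn fun a ha b _ hab => ?_
  have := hV.nonneg.trans ha.1
  split_ifs <;> linarith

lemma uPrice_antitone : Antitone (uPrice μ) := fun a b hab =>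
  integral_mono (hV.integrable_posPart_sub b) (hV.integrable_posPart_sub a) fun v =>
    max_le_max (by linarith) le_rfl

lemma uPrice_lipschitz : LipschitzWith 1 (uPrice μ) := by
  refine LipschitzWith.of_dist_le_mul fun a b => ?_
  rw [NNReal.coe_one, one_mul, Real.dist_eq, Real.dist_eq, uPrice, uPrice,
    ← integral_sub (hV.integrable_posPart_sub a) (hV.integrable_posPart_sub b)]
  calc |∫ v, (max (v - a) 0 - max (v - b) 0) ∂μ| ≤ ∫ v, |max (v - a) 0 - max (v - b) 0| ∂μ :=
        abs_integral_le_integral_abs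
    _ ≤ ∫ _, |a - b| ∂μ := by
        refine integral_mono ((hV.integrable_posPart_sub a).sub
          (hV.integrable_posPart_sub b)).abs (integrable_const _) fun v => ?_
        simpa [abs_sub_comm] using abs_max_sub_max_le_abs (v - a) (v - b) 0
    _ = |a - b| := by simp

lemma continuous_uPrice : Continuous (uPrice μ) := hV.uPrice_lipschitz.continuous

lemma uPrice_le_integral {r : ℝ} (hr : 0 ≤ r) : uPrice μ r ≤ ∫ v, v ∂μ :=
  hV.uPrice_zero ▸ hV.uPrice_antitone hr

lemma ae_le_of_uPrice_eq_zero {r : ℝ} (h : uPrice μ r = 0) : ∀ᵐ v ∂μ, v ≤ r := by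
  have := (integral_eq_zero_iff_of_nonneg (fun v => le_max_right (v - r) 0)
    (hV.integrable_posPart_sub r)).1 h
  exact this.mono fun v hv => sub_nonpos.1 (max_eq_right_iff.1 hv)

lemma uPrice_eq_zero_of_uPrice_eq {a b : ℝ} (hab : a < b) (h : uPrice μ a = uPrice μ b) :
    uPrice μ a = 0 := by
  have hgap (v : ℝ) : 0 ≤ max (v - a) 0 - max (v - b) 0 ∧
      (max (v - a) 0 - max (v - b) 0 = 0 → v ≤ a) := by
    by_cases hva : v ≤ a
    · exact ⟨by rw [max_eq_right (sub_nonpos.2 hva), max_eq_right (by linarith)]; simp,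
        fun _ => hva⟩
    have hpos : 0 < max (v - a) 0 - max (v - b) 0 := by
      rw [max_eq_left (by linarith)]
      rcases le_total v b with hvb | hvb
      · rw [max_eq_right (sub_nonpos.2 hvb)]; linarith
      · rw [max_eq_left (sub_nonneg.2 hvb)]; linarith
    exact ⟨hpos.le, fun h => absurd h hpos.ne'⟩
  have hzero := (integral_eq_zero_iff_of_nonneg (fun v => (hgap v).1)
    ((hV.integrable_posPart_sub a).sub (hV.integrable_posPart_sub b))).1
    (by rw [integral_sub (hV.integrable_posPart_sub a) (hV.integrable_posPart_sub b)]
        exact sub_eq_zero.2 h)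
  exact uPrice_eq_zero_of_ae_le (hzero.mono fun v hv => (hgap v).2 hv)

lemma sPrice_antitone : Antitone (sPrice μ) := fun a b hab =>
  integral_mono_ae (hV.integrable_surplus_price b) (hV.integrable_surplus_price a) <|
    hV.ae_nonneg.mono fun v hv => show ite _ _ _ ≤ ite _ _ _ by split_ifs <;> linarith

lemma sPrice_le_integral (r : ℝ) : sPrice μ r ≤ ∫ v, v ∂μ := by
  rcases le_total 0 r with hr | hr
  · exact hV.sPrice_zero ▸ hV.sPrice_antitone hr
  · exact le_of_eq <| integral_congr_ae <| hV.ae_nonneg.mono fun v hv => if_pos (hr.trans hv)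

variable [NullSingletonClass μ]

lemma sPrice_le_of_uPrice_eq {q ρ : ℝ} (h : uPrice μ q = uPrice μ ρ) : sPrice μ q ≤ sPrice μ ρ := by
  rcases lt_trichotomy q ρ with hlt | rfl | hgt
  · rw [sPrice_eq_zero_of_ae_le (hV.ae_le_of_uPrice_eq_zero (hV.uPrice_eq_zero_of_uPrice_eq hlt h))]
    exact hV.sPrice_nonneg ρ
  · rfl
  · have h0 := hV.uPrice_eq_zero_of_uPrice_eq hgt h.symm
    rw [sPrice_eq_zero_of_ae_le (hV.ae_le_of_uPrice_eq_zero (h.trans h0))]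
    exact hV.sPrice_nonneg ρ

lemma continuous_sPrice : Continuous (sPrice μ) := by
  refine continuous_iff_continuousAt.2 fun r₀ => continuousAt_of_dominated
    (bound := fun v => |v|) (Eventually.of_forall fun r =>
      (Measurable.ite measurableSet_Ici measurable_id measurable_const).aestronglyMeasurable)
    (Eventually.of_forall fun r => Eventually.of_forall fun v => ?_)
    (hV.integrable_of_continuous continuous_abs) ?_
  · split_ifs <;> simp
  · filter_upwards [Measure.ae_ne μ r₀] with v hv
    rcases hv.lt_or_gt with h | h
    · exact continuousAt_const.congr
        ((eventually_gt_nhds h).mono fun r hr => (if_neg hr.not_ge).symm)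
    · exact continuousAt_const.congr
        ((eventually_lt_nhds h).mono fun r hr => (if_pos hr.le).symm)

end IsValueDist

/-- The posted price that sells to exactly the types `t ∈ [l, hb]` with `s < χ t`, up to the
boundary point; `hb` when there is no such type. -/
noncomputable def threshold (l hb : ℝ) (χ : ℝ → ℝ) (s : ℝ) : ℝ :=
  sInf ({t ∈ Icc l hb | s < χ t} ∪ {hb})

section Threshold

variable {l hb : ℝ} {χ : ℝ → ℝ} {s t : ℝ}

lemma le_of_mem_threshold_set (hlh : l ≤ hb) (s : ℝ) :
    ∀ w ∈ {t ∈ Icc l hb | s < χ t} ∪ {hb}, l ≤ w := by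
  rintro w (hw | rfl)
  exacts [hw.1.1, hlh]

lemma threshold_mem (hlh : l ≤ hb) (s : ℝ) : threshold l hb χ s ∈ Icc l hb :=
  ⟨le_csInf ⟨hb, Or.inr rfl⟩ (le_of_mem_threshold_set hlh s),
    csInf_le ⟨l, le_of_mem_threshold_set hlh s⟩ (Or.inr rfl)⟩

lemma threshold_mono (hlh : l ≤ hb) : Monotone (threshold l hb χ) := fun s s' hss' =>
  csInf_le_csInf ⟨l, le_of_mem_threshold_set hlh s⟩ ⟨hb, Or.inr rfl⟩ <| by
    rintro w (⟨hw, hsw⟩ | hw)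
    exacts [Or.inl ⟨hw, hss'.trans_lt hsw⟩, Or.inr hw]

lemma threshold_le (hlh : l ≤ hb) (ht : t ∈ Icc l hb) (h : s < χ t) : threshold l hb χ s ≤ t :=
  csInf_le ⟨l, le_of_mem_threshold_set hlh s⟩ (Or.inl ⟨ht, h⟩)

lemma lt_of_threshold_lt (hχ : MonotoneOn χ (Icc l hb)) (ht : t ∈ Icc l hb)
    (h : threshold l hb χ s < t) : s < χ t := by
  obtain ⟨w, hw | rfl, hwt⟩ := exists_lt_of_csInf_lt ⟨hb, Or.inr rfl⟩ h
  · exact hw.2.trans_le (hχ hw.1 ht hwt.le)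
  · exact absurd ht.2 hwt.not_ge

end Threshold

section LayerCake

variable {μ : Measure ℝ} {l hb : ℝ} [IsProbabilityMeasure μ] [NullSingletonClass μ]
  {χ : ℝ → ℝ}

lemma IsValueDist.integral_mul_eq_integral_sPrice_threshold (hV : IsValueDist μ l hb)
    (hχ : Monotone χ) (hχ01 : ∀ v, χ v ∈ Icc (0 : ℝ) 1) :
    ∫ v, v * χ v ∂μ = ∫ s in Ioo (0 : ℝ) 1, sPrice μ (threshold l hb χ s) := by
  rw [integral_mul_eq_integral_setIntegral_lt hV.integrable_id hχ.measurable hχ01]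
  refine setIntegral_congr_fun measurableSet_Ioo fun s _ => ?_
  rw [sPrice_eq_setIntegral]
  refine setIntegral_congr_set ?_
  filter_upwards [hV.ae_mem, Measure.ae_ne μ (threshold l hb χ s)] with v hv hne
  exact propext ⟨threshold_le hV.le hv,
    fun h => lt_of_threshold_lt (hχ.monotoneOn _) hv (h.lt_of_ne' hne)⟩

lemma setIntegral_posPart_sub_threshold_le (hlh : l ≤ hb) (hχ : Monotone χ)
    (hχ01 : ∀ v, χ v ∈ Icc (0 : ℝ) 1) {v : ℝ} (hv : v ∈ Icc l hb) :
    ∫ s in Ioo (0 : ℝ) 1, max (v - threshold l hb χ s) 0 ≤ ∫ t in Ioo l v, χ t := by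
  set ν := volume.restrict (Ioo l v)
  have hlayer := integral_mul_eq_integral_setIntegral_lt (ν := ν) (integrable_const 1)
    hχ.measurable hχ01
  simp only [one_mul, setIntegral_const, smul_eq_mul, mul_one] at hlayer
  rw [hlayer]
  refine setIntegral_mono_on ?_ ?_ measurableSet_Ioo fun s _ => ?_
  · refine (Antitone.intervalIntegrable ?_).1.mono_set Ioo_subset_Ioc_self
    exact fun s s' hss' => max_le_max (by linarith [threshold_mono (χ := χ) hlh hss']) le_rfl
  · refine (Antitone.intervalIntegrable fun s s' hss' => ?_).1.mono_set Ioo_subset_Ioc_self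
    exact measureReal_mono fun t ht => hss'.trans_lt ht
  · have hr := threshold_mem (χ := χ) hlh s
    rw [← Real.volume_real_Ioo, measureReal_restrict_apply (measurableSet_lt measurable_const
      hχ.measurable)]
    refine measureReal_mono (fun t ht => ⟨?_, hr.1.trans_lt ht.1, ht.2⟩)
      (measure_inter_lt_top_of_right_ne_top measure_Ioo_lt_top.ne).ne
    exact lt_of_threshold_lt (hχ.monotoneOn _) ⟨hr.1.trans ht.1.le, ht.2.le.trans hv.2⟩ ht.1

end LayerCake

section Domination

variable {μ : Measure ℝ} {l hb : ℝ} [IsProbabilityMeasure μ] {x p : ℝ → ℝ}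

lemma IsValueDist.integrable_surplus (hV : IsValueDist μ l hb) (hx : ∀ v, x v ∈ Icc (0 : ℝ) 1)
    (hIC : ∀ v ∈ Icc l hb, ∀ v' ∈ Icc l hb, v * x v' - p v' ≤ v * x v - p v) :
    Integrable (fun v => v * x v) μ :=
  hV.integrable_of_monotoneOn <| monotoneOn_id.mul (monotoneOn_of_IC hIC)
    (fun _ hv => hV.nonneg.trans hv.1) fun v _ => (hx v).1

lemma IsValueDist.integrable_utility (hV : IsValueDist μ l hb) (hx : ∀ v, x v ∈ Icc (0 : ℝ) 1)
    (hIC : ∀ v ∈ Icc l hb, ∀ v' ∈ Icc l hb, v * x v' - p v' ≤ v * x v - p v) :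
    Integrable (fun v => v * x v - p v) μ :=
  hV.integrable_of_monotoneOn (monotoneOn_utility_of_IC hIC fun v => (hx v).1)

theorem IsValueDist.exists_price_randomization [NullSingletonClass μ] (hV : IsValueDist μ l hb)
    (hx : ∀ v, x v ∈ Icc (0 : ℝ) 1)
    (hIC : ∀ v ∈ Icc l hb, ∀ v' ∈ Icc l hb, v * x v' - p v' ≤ v * x v - p v)
    (hIR : ∀ v ∈ Icc l hb, 0 ≤ v * x v - p v) :
    ∃ r : ℝ → ℝ, Monotone r ∧ (∀ s, r s ∈ Icc l hb) ∧
      ∫ v, v * x v ∂μ = ∫ s in Ioo (0 : ℝ) 1, sPrice μ (r s) ∧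
      ∫ s in Ioo (0 : ℝ) 1, uPrice μ (r s) ≤ ∫ v, (v * x v - p v) ∂μ := by
  set χ := IccExtend hV.le fun t : Icc l hb => x t
  have hχ : Monotone χ := Monotone.IccExtend _ fun a b hab => monotoneOn_of_IC hIC a.2 b.2 hab
  have hχ01 (v : ℝ) : χ v ∈ Icc (0 : ℝ) 1 := hx _
  have hχx {v : ℝ} (hv : v ∈ Icc l hb) : χ v = x v := IccExtend_of_mem _ _ hv
  set r := threshold l hb χ
  have hr : ∀ s, r s ∈ Icc l hb := threshold_mem hV.le
  refine ⟨r, threshold_mono hV.le, hr, ?_, ?_⟩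
  · rw [← hV.integral_mul_eq_integral_sPrice_threshold hχ hχ01]
    exact integral_congr_ae (hV.ae_mem.mono fun v hv => by simp only [hχx hv])
  have hpointwise {v : ℝ} (hv : v ∈ Icc l hb) :
      ∫ s in Ioo (0 : ℝ) 1, max (v - r s) 0 ≤ v * x v - p v := by
    have hsub : Icc l v ⊆ Icc l hb := Icc_subset_Icc_right hv.2
    calc ∫ s in Ioo (0 : ℝ) 1, max (v - r s) 0 ≤ ∫ t in Ioo l v, χ t :=
          setIntegral_posPart_sub_threshold_le hV.le hχ hχ01 hv
      _ = ∫ t in l..v, χ t := by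
          rw [intervalIntegral.integral_of_le hv.1, integral_Ioc_eq_integral_Ioo]
      _ ≤ (v * x v - p v) - (l * x l - p l) := by
          refine integral_le_sub_of_subgradient (U := fun v => v * x v - p v) hv.1
            (hχ.monotoneOn _) fun a ha b hb _ => ?_
          rw [hχx (hsub ha)]
          exact sub_mul_le_utility_sub hIC (hsub ha) (hsub hb)
      _ ≤ v * x v - p v := by linarith [hIR l (left_mem_Icc.2 hV.le)]
  set F : ℝ → ℝ → ℝ := fun v s => max (v - r s) 0
  have hF : Integrable (Function.uncurry F) (μ.prod (volume.restrict (Ioo (0 : ℝ) 1))) := by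
    refine ((hV.integrable_posPart_sub l).comp_fst _).mono' ?_ (Eventually.of_forall fun z => ?_)
    · exact ((measurable_fst.sub ((threshold_mono hV.le).measurable.comp measurable_snd)).max
        measurable_const).aestronglyMeasurable
    · change ‖max (z.1 - r z.2) 0‖ ≤ _
      rw [Real.norm_of_nonneg (le_max_right _ _)]
      exact max_le_max (by linarith [(hr z.2).1]) le_rfl
  calc ∫ s in Ioo (0 : ℝ) 1, uPrice μ (r s) = ∫ s in Ioo (0 : ℝ) 1, ∫ v, F v s ∂μ := rfl
    _ = ∫ v, (∫ s in Ioo (0 : ℝ) 1, F v s) ∂μ := (integral_integral_swap hF).symm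
    _ ≤ ∫ v, (v * x v - p v) ∂μ :=
        integral_mono_ae hF.integral_prod_left (hV.integrable_utility hx hIC)
          (hV.ae_mem.mono fun _ hv => hpointwise hv)

end Domination

noncomputable def lagrangian (μ : Measure ℝ) (η ρ : ℝ) : ℝ := sPrice μ ρ - η * uPrice μ ρ

noncomputable def dualFn (μ : Measure ℝ) (hb η : ℝ) : ℝ := sSup (lagrangian μ η '' Icc 0 hb)

lemma mul_uPrice_sub_nonpos_of_isMinOn {μ : Measure ℝ} {hb η η' c ρ : ℝ}
    (hmin : IsMinOn (fun η => dualFn μ hb η + η * c) (Ici 0) η) (hη' : 0 ≤ η')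
    (hρ : lagrangian μ η ρ ≤ dualFn μ hb η) (hρ' : lagrangian μ η' ρ = dualFn μ hb η') :
    (η' - η) * (uPrice μ ρ - c) ≤ 0 := by
  have hle : dualFn μ hb η + η * c ≤ dualFn μ hb η' + η' * c := hmin (show η' ∈ Ici 0 from hη')
  simp only [lagrangian] at hρ hρ'
  nlinarith

lemma gVal_eq_of_isGreatest {μ : Measure ℝ} {l hb c : ℝ} {x p : ℝ → ℝ}
    (hf : Feas μ l hb c x p)
    (hmax : ∀ x' p', Feas μ l hb c x' p' → ∫ v, v * x' v ∂μ ≤ ∫ v, v * x v ∂μ) :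
    gVal μ l hb c = ∫ v, v * x v ∂μ :=
  IsGreatest.csSup_eq ⟨⟨x, p, hf, rfl⟩, by rintro _ ⟨x', p', hf', rfl⟩; exact hmax x' p' hf'⟩

namespace IsValueDist

variable {μ : Measure ℝ} {l hb c : ℝ} (hV : IsValueDist μ l hb)
include hV

lemma feas_one (hc : ∫ v, v ∂μ ≤ c) : Feas μ l hb c (fun _ => 1) (fun _ => 0) :=
  ⟨fun _ => ⟨zero_le_one, le_rfl⟩, fun _ _ _ _ => le_rfl,
    fun v hv => by simpa using hV.nonneg.trans hv.1, by simpa using hc⟩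

variable [IsProbabilityMeasure μ]

lemma surplus_le_integral {x p : ℝ → ℝ} (hf : Feas μ l hb c x p) :
    ∫ v, v * x v ∂μ ≤ ∫ v, v ∂μ :=
  integral_mono_ae (hV.integrable_surplus hf.1 hf.2.1) hV.integrable_id
    (hV.ae_nonneg.mono fun v hv => mul_le_of_le_one_right hv (hf.1 v).2)

lemma le_gVal {x p : ℝ → ℝ} (hf : Feas μ l hb c x p) : ∫ v, v * x v ∂μ ≤ gVal μ l hb c :=
  le_csSup ⟨∫ v, v ∂μ, by rintro _ ⟨x', p', hf', rfl⟩; exact hV.surplus_le_integral hf'⟩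
    ⟨x, p, hf, rfl⟩

lemma integral_step_utility {p₁ p₂ α : ℝ} (hp : p₁ ≤ p₂) :
    ∫ v, (v * stepX p₁ p₂ α v - stepP p₁ p₂ α v) ∂μ
      = α * uPrice μ p₁ + (1 - α) * uPrice μ p₂ := by
  simp only [step_utility_eq hp]
  rw [integral_add ((hV.integrable_posPart_sub p₁).const_mul α)
    ((hV.integrable_posPart_sub p₂).const_mul (1 - α)), integral_const_mul, integral_const_mul,
    uPrice, uPrice]

lemma integral_step_surplus {p₁ p₂ α : ℝ} (hp : p₁ ≤ p₂) :
    ∫ v, v * stepX p₁ p₂ α v ∂μ = α * sPrice μ p₁ + (1 - α) * sPrice μ p₂ := by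
  simp only [step_surplus_eq hp]
  rw [integral_add ((hV.integrable_surplus_price p₁).const_mul α)
    ((hV.integrable_surplus_price p₂).const_mul (1 - α)), integral_const_mul, integral_const_mul,
    sPrice, sPrice]

lemma feas_step {p₁ p₂ α : ℝ} (hp : p₁ ≤ p₂) (hα : α ∈ Icc (0 : ℝ) 1)
    (hc : α * uPrice μ p₁ + (1 - α) * uPrice μ p₂ ≤ c) :
    Feas μ l hb c (stepX p₁ p₂ α) (stepP p₁ p₂ α) :=
  ⟨stepX_mem_Icc hα, fun v _ v' _ => step_IC hp hα v v', fun v _ => step_IR hp hα v,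
    (hV.integral_step_utility hp).trans_le hc⟩

lemma gVal_of_integral_le (hc : ∫ v, v ∂μ ≤ c) : gVal μ l hb c = ∫ v, v ∂μ := by
  simpa using gVal_eq_of_isGreatest (hV.feas_one hc) fun x' p' hf' => by
    simpa using hV.surplus_le_integral hf'

lemma feas_mix {c₁ c₂ a b : ℝ} {x₁ p₁ x₂ p₂ : ℝ → ℝ}
    (hf₁ : Feas μ l hb c₁ x₁ p₁) (hf₂ : Feas μ l hb c₂ x₂ p₂) (ha : 0 ≤ a) (hb' : 0 ≤ b)
    (hab : a + b = 1) :
    Feas μ l hb (a * c₁ + b * c₂) (fun v => a * x₁ v + b * x₂ v)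
      (fun v => a * p₁ v + b * p₂ v) := by
  obtain ⟨hx₁, hIC₁, hIR₁, hU₁⟩ := hf₁
  obtain ⟨hx₂, hIC₂, hIR₂, hU₂⟩ := hf₂
  refine ⟨fun v => convex_Icc (0 : ℝ) 1 (hx₁ v) (hx₂ v) ha hb' hab, fun v hv v' hv' => ?_,
    fun v hv => ?_, ?_⟩
  · nlinarith [mul_le_mul_of_nonneg_left (hIC₁ v hv v' hv') ha,
      mul_le_mul_of_nonneg_left (hIC₂ v hv v' hv') hb']
  · nlinarith [mul_nonneg ha (hIR₁ v hv), mul_nonneg hb' (hIR₂ v hv)]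
  · have h₁ := (hV.integrable_utility hx₁ hIC₁).const_mul a
    have h₂ := (hV.integrable_utility hx₂ hIC₂).const_mul b
    calc ∫ v, (v * (a * x₁ v + b * x₂ v) - (a * p₁ v + b * p₂ v)) ∂μ
        = a * ∫ v, (v * x₁ v - p₁ v) ∂μ + b * ∫ v, (v * x₂ v - p₂ v) ∂μ := by
          rw [← integral_const_mul, ← integral_const_mul, ← integral_add h₁ h₂]
          congr 1; ext v; ring
      _ ≤ a * c₁ + b * c₂ := by gcongr

variable [NullSingletonClass μ]

lemma continuous_lagrangian : Continuous (Function.uncurry (lagrangian μ)) :=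
  (hV.continuous_sPrice.comp continuous_snd).sub
    (continuous_fst.mul (hV.continuous_uPrice.comp continuous_snd))

lemma continuous_dualFn : Continuous (dualFn μ hb) :=
  isCompact_Icc.continuous_sSup hV.continuous_lagrangian

lemma lagrangian_le_dualFn (η : ℝ) {ρ : ℝ} (hρ : ρ ∈ Icc 0 hb) :
    lagrangian μ η ρ ≤ dualFn μ hb η :=
  le_csSup ((isCompact_Icc.image (hV.continuous_lagrangian.uncurry_left η)).bddAbove)
    (mem_image_of_mem _ hρ)

lemma exists_lagrangian_eq_dualFn (η : ℝ) :
    ∃ ρ ∈ Icc 0 hb, lagrangian μ η ρ = dualFn μ hb η :=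
  (isCompact_Icc.image (hV.continuous_lagrangian.uncurry_left η)).sSup_mem
    ((nonempty_Icc.2 (hV.nonneg.trans hV.le)).image _)

lemma dualFn_nonneg (η : ℝ) : 0 ≤ dualFn μ hb η := by
  have h := hV.lagrangian_le_dualFn η ⟨hV.nonneg.trans hV.le, le_rfl⟩
  rwa [lagrangian, hV.sPrice_right, hV.uPrice_right, mul_zero, sub_zero] at h

lemma dualFn_zero : dualFn μ hb 0 = lagrangian μ 0 0 := by
  obtain ⟨ρ, -, hρ⟩ := hV.exists_lagrangian_eq_dualFn 0
  refine le_antisymm ?_ (hV.lagrangian_le_dualFn 0 ⟨le_rfl, hV.nonneg.trans hV.le⟩)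
  rw [← hρ, lagrangian, lagrangian, zero_mul, zero_mul, sub_zero, sub_zero, hV.sPrice_zero]
  exact hV.sPrice_le_integral ρ

lemma surplus_le_dualFn {x p : ℝ → ℝ} (hx : ∀ v, x v ∈ Icc (0 : ℝ) 1)
    (hIC : ∀ v ∈ Icc l hb, ∀ v' ∈ Icc l hb, v * x v' - p v' ≤ v * x v - p v)
    (hIR : ∀ v ∈ Icc l hb, 0 ≤ v * x v - p v) {η : ℝ} (hη : 0 ≤ η) :
    ∫ v, v * x v ∂μ ≤ dualFn μ hb η + η * ∫ v, (v * x v - p v) ∂μ := by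
  obtain ⟨r, hr_mono, hr, hS, hU⟩ := hV.exists_price_randomization hx hIC hIR
  have hSr : IntegrableOn (fun s => sPrice μ (r s)) (Ioo 0 1) :=
    (hV.sPrice_antitone.comp_monotone hr_mono).intervalIntegrable.1.mono_set Ioo_subset_Ioc_self
  have hUr : IntegrableOn (fun s => uPrice μ (r s)) (Ioo 0 1) :=
    (hV.uPrice_antitone.comp_monotone hr_mono).intervalIntegrable.1.mono_set Ioo_subset_Ioc_self
  have hLr : ∫ s in Ioo (0 : ℝ) 1, lagrangian μ η (r s) ≤ dualFn μ hb η := by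
    calc ∫ s in Ioo (0 : ℝ) 1, lagrangian μ η (r s) ≤ ∫ _ in Ioo (0 : ℝ) 1, dualFn μ hb η :=
          setIntegral_mono_on (hSr.sub (hUr.const_mul η))
            (integrableOn_const measure_Ioo_lt_top.ne) measurableSet_Ioo fun s _ =>
              hV.lagrangian_le_dualFn η ⟨hV.nonneg.trans (hr s).1, (hr s).2⟩
      _ = dualFn μ hb η := by simp
  calc ∫ v, v * x v ∂μ
      = (∫ s in Ioo (0 : ℝ) 1, lagrangian μ η (r s)) +
          η * ∫ s in Ioo (0 : ℝ) 1, uPrice μ (r s) := by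
        simp only [hS, lagrangian]
        rw [integral_sub hSr (hUr.const_mul η), integral_const_mul]
        ring
    _ ≤ dualFn μ hb η + η * ∫ v, (v * x v - p v) ∂μ :=
        add_le_add hLr (mul_le_mul_of_nonneg_left hU hη)

lemma surplus_eq_zero_of_utility_nonpos {x p : ℝ → ℝ} (hx : ∀ v, x v ∈ Icc (0 : ℝ) 1)
    (hIC : ∀ v ∈ Icc l hb, ∀ v' ∈ Icc l hb, v * x v' - p v' ≤ v * x v - p v)
    (hIR : ∀ v ∈ Icc l hb, 0 ≤ v * x v - p v) (hU : ∫ v, (v * x v - p v) ∂μ ≤ 0) :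
    ∫ v, v * x v ∂μ = 0 := by
  obtain ⟨r, hr_mono, -, hS, hUr⟩ := hV.exists_price_randomization hx hIC hIR
  have hzero := (integral_eq_zero_iff_of_nonneg (fun s => uPrice_nonneg μ (r s))
    ((hV.uPrice_antitone.comp_monotone hr_mono).intervalIntegrable.1.mono_set
      Ioo_subset_Ioc_self)).1
    (le_antisymm (hUr.trans hU) (integral_nonneg fun s => uPrice_nonneg μ _))
  rw [hS]
  exact integral_eq_zero_of_ae (hzero.mono fun s hs =>
    sPrice_eq_zero_of_ae_le (hV.ae_le_of_uPrice_eq_zero hs))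

lemma exists_isMinOn_dual {c : ℝ} (hc : 0 < c) :
    ∃ η, 0 ≤ η ∧ IsMinOn (fun η => dualFn μ hb η + η * c) (Ici 0) η := by
  set Λ := dualFn μ hb 0 / c
  have hΛ : 0 ≤ Λ := div_nonneg (hV.dualFn_nonneg 0) hc.le
  obtain ⟨η, hη, hmin⟩ := isCompact_Icc.exists_isMinOn (nonempty_Icc.2 hΛ)
    (hV.continuous_dualFn.add (continuous_id.mul continuous_const)).continuousOn
  refine ⟨η, hη.1, fun η' (hη' : 0 ≤ η') => ?_⟩
  rcases le_total η' Λ with h | h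
  · exact hmin ⟨hη', h⟩
  · have h0 : dualFn μ hb η + η * c ≤ dualFn μ hb 0 + 0 * c := hmin ⟨le_rfl, hΛ⟩
    have hΛc : Λ * c = dualFn μ hb 0 := div_mul_cancel₀ _ hc.ne'
    show dualFn μ hb η + η * c ≤ dualFn μ hb η' + η' * c
    nlinarith [hV.dualFn_nonneg η']

lemma exists_lagrangian_eq_dualFn_of_tendsto {η : ℝ} {η' : ℕ → ℝ}
    (hη' : Tendsto η' atTop (𝓝 η)) {s : Set ℝ} (hs : IsClosed s)
    (h : ∀ n, ∀ ρ ∈ Icc 0 hb, lagrangian μ (η' n) ρ = dualFn μ hb (η' n) → uPrice μ ρ ∈ s) :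
    ∃ ρ ∈ Icc 0 hb, lagrangian μ η ρ = dualFn μ hb η ∧ uPrice μ ρ ∈ s := by
  choose ρ hρ hρeq using fun n => hV.exists_lagrangian_eq_dualFn (η' n)
  obtain ⟨ρ₀, hρ₀, φ, hφ, hlim⟩ := isCompact_Icc.tendsto_subseq hρ
  have hη'φ := hη'.comp hφ.tendsto_atTop
  have hlag : Tendsto (fun n => lagrangian μ (η' (φ n)) (ρ (φ n))) atTop
      (𝓝 (lagrangian μ η ρ₀)) :=
    (hV.continuous_lagrangian.tendsto (η, ρ₀)).comp (hη'φ.prodMk_nhds hlim)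
  have hdual : Tendsto (fun n => lagrangian μ (η' (φ n)) (ρ (φ n))) atTop
      (𝓝 (dualFn μ hb η)) :=
    ((hV.continuous_dualFn.tendsto η).comp hη'φ).congr fun n => (hρeq (φ n)).symm
  exact ⟨ρ₀, hρ₀, tendsto_nhds_unique hlag hdual, hs.mem_of_tendsto
    ((hV.continuous_uPrice.tendsto ρ₀).comp hlim)
    (Eventually.of_forall fun n => h _ _ (hρ _) (hρeq _))⟩

lemma exists_maximizers_bracketing {c : ℝ} (hc : 0 < c) (hcE : c ≤ ∫ v, v ∂μ) :
    ∃ η, ∃ r₁ ∈ Icc 0 hb, ∃ r₂ ∈ Icc 0 hb, 0 ≤ η ∧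
      lagrangian μ η r₁ = dualFn μ hb η ∧ lagrangian μ η r₂ = dualFn μ hb η ∧
      uPrice μ r₂ ≤ c ∧ c ≤ uPrice μ r₁ := by
  obtain ⟨η, hη, hmin⟩ := hV.exists_isMinOn_dual hc
  -- maximizers for multipliers slightly above (below) `η` leave at most (at least) utility `c`
  have hbound (η' : ℝ) (hη' : 0 ≤ η') (ρ : ℝ) (hρ : ρ ∈ Icc 0 hb)
      (hρ' : lagrangian μ η' ρ = dualFn μ hb η') : (η' - η) * (uPrice μ ρ - c) ≤ 0 :=
    mul_uPrice_sub_nonpos_of_isMinOn hmin hη' (hV.lagrangian_le_dualFn η hρ) hρ'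
  have hpos (n : ℕ) : (0 : ℝ) < 1 / (n + 1) := Nat.one_div_pos_of_nat
  obtain ⟨r₂, hr₂, hr₂eq, hur₂⟩ := hV.exists_lagrangian_eq_dualFn_of_tendsto
    (η' := fun n => η + 1 / (n + 1))
    (by simpa using tendsto_one_div_add_atTop_nhds_zero_nat.const_add η) isClosed_Iic
    fun n ρ hρ hρ' => by
      have := hbound _ (by linarith [hpos n]) ρ hρ hρ'
      show uPrice μ ρ ≤ c
      nlinarith [hpos n]
  obtain ⟨r₁, hr₁, hr₁eq, hur₁⟩ : ∃ r₁ ∈ Icc 0 hb, lagrangian μ η r₁ = dualFn μ hb η ∧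
      c ≤ uPrice μ r₁ := by
    rcases hη.eq_or_lt with rfl | hη
    · exact ⟨0, ⟨le_rfl, hV.nonneg.trans hV.le⟩, hV.dualFn_zero.symm, hV.uPrice_zero ▸ hcE⟩
    refine hV.exists_lagrangian_eq_dualFn_of_tendsto (η' := fun n => η - η * (1 / (n + 1)))
      (by simpa using (tendsto_one_div_add_atTop_nhds_zero_nat.const_mul η).const_sub η)
      isClosed_Ici fun n ρ hρ hρ' => ?_
    have hle : 1 / ((n : ℝ) + 1) ≤ 1 := by
      rw [div_le_one (by positivity)]; linarith [n.cast_nonneg (α := ℝ)]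
    have := hbound _ (by nlinarith [hpos n]) ρ hρ hρ'
    show c ≤ uPrice μ ρ
    nlinarith [mul_pos hη (hpos n)]
  exact ⟨η, r₁, hr₁, r₂, hr₂, hη, hr₁eq, hr₂eq, hur₂, hur₁⟩

lemma exists_two_price_upper_bound (hc0 : 0 ≤ c) (hcE : c ≤ ∫ v, v ∂μ) :
    ∃ q₁ q₂ α : ℝ, 0 ≤ q₁ ∧ q₁ ≤ q₂ ∧ α ∈ Icc (0 : ℝ) 1 ∧
      α * uPrice μ q₁ + (1 - α) * uPrice μ q₂ = c ∧
      ∀ x p, Feas μ l hb c x p → ∫ v, v * x v ∂μ ≤ α * sPrice μ q₁ + (1 - α) * sPrice μ q₂ := by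
  rcases hc0.eq_or_lt with rfl | hc
  · refine ⟨hb, hb, 1, hV.nonneg.trans hV.le, le_rfl, ⟨zero_le_one, le_rfl⟩,
      by simp [hV.uPrice_right], fun x p hf => ?_⟩
    rw [hV.surplus_eq_zero_of_utility_nonpos hf.1 hf.2.1 hf.2.2.1 hf.2.2.2, hV.sPrice_right]
    simp
  obtain ⟨η, r₁, hr₁, r₂, hr₂, hη, hr₁eq, hr₂eq, hur₂, hur₁⟩ :=
    hV.exists_maximizers_bracketing hc hcE
  obtain ⟨a, b, ha, hb', hab, habc⟩ : c ∈ segment ℝ (uPrice μ r₂) (uPrice μ r₁) := by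
    rw [segment_eq_Icc (hur₂.trans hur₁)]; exact ⟨hur₂, hur₁⟩
  simp only [smul_eq_mul] at habc
  have hmix {q q' β : ℝ} (hβ : β * uPrice μ q + (1 - β) * uPrice μ q' = c)
      (hq : lagrangian μ η q = dualFn μ hb η) (hq' : lagrangian μ η q' = dualFn μ hb η)
      (x p : ℝ → ℝ) (hf : Feas μ l hb c x p) :
      ∫ v, v * x v ∂μ ≤ β * sPrice μ q + (1 - β) * sPrice μ q' := by
    have hdual := hV.surplus_le_dualFn hf.1 hf.2.1 hf.2.2.1 hη
    have hutil := mul_le_mul_of_nonneg_left hf.2.2.2 hη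
    simp only [lagrangian] at hq hq'
    calc ∫ v, v * x v ∂μ ≤ dualFn μ hb η + η * c := by linarith
      _ = β * sPrice μ q + (1 - β) * sPrice μ q' := by
          rw [← hβ]; linear_combination -β * hq - (1 - β) * hq'
  rcases le_total r₁ r₂ with h | h
  · exact ⟨r₁, r₂, b, hr₁.1, h, ⟨hb', by linarith⟩, by rw [← habc, ← hab]; ring,
      hmix (by rw [← habc, ← hab]; ring) hr₁eq hr₂eq⟩
  · exact ⟨r₂, r₁, a, hr₂.1, h, ⟨ha, by linarith⟩, by rw [← habc, ← hab]; ring,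
      hmix (by rw [← habc, ← hab]; ring) hr₂eq hr₁eq⟩

lemma exists_step_optimal (hc0 : 0 ≤ c) (hcE : c ≤ ∫ v, v ∂μ) :
    ∃ p₁ p₂ α : ℝ, p₁ ≤ p₂ ∧ α ∈ Icc (0 : ℝ) 1 ∧
      Feas μ l hb c (stepX p₁ p₂ α) (stepP p₁ p₂ α) ∧
      ∫ v, (v * stepX p₁ p₂ α v - stepP p₁ p₂ α v) ∂μ = c ∧
      ∫ v, v * stepX p₁ p₂ α v ∂μ = gVal μ l hb c := by
  obtain ⟨q₁, q₂, α, -, hq, hα, hu, hS⟩ := hV.exists_two_price_upper_bound hc0 hcE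
  have hf := hV.feas_step hq hα hu.le
  refine ⟨q₁, q₂, α, hq, hα, hf, (hV.integral_step_utility hq).trans hu,
    (gVal_eq_of_isGreatest hf fun x p hf' => ?_).symm⟩
  rw [hV.integral_step_surplus hq]
  exact hS x p hf'

lemma exists_posted_price_optimal {pr : ℝ → ℝ}
    (hpr : ∀ c ∈ Icc 0 (∫ v, v ∂μ), uPrice μ (pr c) = c)
    (hconc : ConcaveOn ℝ (Icc 0 (∫ v, v ∂μ)) fun c => sPrice μ (pr c))
    (hc0 : 0 ≤ c) (hcE : c ≤ ∫ v, v ∂μ) :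
    ∃ ρ : ℝ, Feas μ l hb c (stepX ρ ρ 1) (stepP ρ ρ 1) ∧
      ∫ v, (v * stepX ρ ρ 1 v - stepP ρ ρ 1 v) ∂μ = c ∧
      ∫ v, v * stepX ρ ρ 1 v ∂μ = gVal μ l hb c := by
  obtain ⟨q₁, q₂, α, hq₁, hq, hα, hu, hS⟩ := hV.exists_two_price_upper_bound hc0 hcE
  have hmem {q : ℝ} (hq : 0 ≤ q) : uPrice μ q ∈ Icc 0 (∫ v, v ∂μ) :=
    ⟨uPrice_nonneg μ q, hV.uPrice_le_integral hq⟩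
  have hle {q : ℝ} (hq : 0 ≤ q) : sPrice μ q ≤ sPrice μ (pr (uPrice μ q)) :=
    hV.sPrice_le_of_uPrice_eq (hpr _ (hmem hq)).symm
  have hjensen : α * sPrice μ (pr (uPrice μ q₁)) + (1 - α) * sPrice μ (pr (uPrice μ q₂))
      ≤ sPrice μ (pr c) := by
    simpa [hu] using hconc.2 (hmem hq₁) (hmem (hq₁.trans hq)) hα.1 (sub_nonneg.2 hα.2) (by ring)
  have hu_pr : uPrice μ (pr c) = c := hpr c ⟨hc0, hcE⟩
  have hf : Feas μ l hb c (stepX (pr c) (pr c) 1) (stepP (pr c) (pr c) 1) :=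
    hV.feas_step le_rfl ⟨zero_le_one, le_rfl⟩ (by simp [hu_pr])
  refine ⟨pr c, hf, by rw [hV.integral_step_utility le_rfl, hu_pr]; ring,
    (gVal_eq_of_isGreatest hf fun x p hf' => ?_).symm⟩
  calc ∫ v, v * x v ∂μ ≤ α * sPrice μ q₁ + (1 - α) * sPrice μ q₂ := hS x p hf'
    _ ≤ α * sPrice μ (pr (uPrice μ q₁)) + (1 - α) * sPrice μ (pr (uPrice μ q₂)) :=
        add_le_add (mul_le_mul_of_nonneg_left (hle hq₁) hα.1)
          (mul_le_mul_of_nonneg_left (hle (hq₁.trans hq)) (sub_nonneg.2 hα.2))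
    _ ≤ sPrice μ (pr c) := hjensen
    _ = ∫ v, v * stepX (pr c) (pr c) 1 v ∂μ := by rw [hV.integral_step_surplus le_rfl]; ring

lemma exists_optimal_utility_eq (hc0 : 0 ≤ c) :
    ∃ x p : ℝ → ℝ, Feas μ l hb c x p ∧
      ∫ v, (v * x v - p v) ∂μ = c ∧ ∫ v, v * x v ∂μ = gVal μ l hb c := by
  rcases le_total c (∫ v, v ∂μ) with hcE | hcE
  · obtain ⟨p₁, p₂, α, -, -, hf, hu, hS⟩ := hV.exists_step_optimal hc0 hcE
    exact ⟨_, _, hf, hu, hS⟩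
  have hu : ∫ v, (v * 1 - ((∫ v, v ∂μ) - c)) ∂μ = c := by
    simp only [mul_one]
    rw [integral_sub hV.integrable_id (integrable_const _)]
    simp
  refine ⟨fun _ => 1, fun _ => (∫ v, v ∂μ) - c, ⟨fun _ => ⟨zero_le_one, le_rfl⟩,
    fun _ _ _ _ => le_rfl, fun v hv => ?_, hu.le⟩, hu, by simp [hV.gVal_of_integral_le hcE]⟩
  linarith [hV.nonneg.trans hv.1]

lemma concaveOn_gVal : ConcaveOn ℝ (Ici 0) (gVal μ l hb) := by
  refine ⟨convex_Ici 0, fun c₁ hc₁ c₂ hc₂ a b ha hb' hab => ?_⟩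
  obtain ⟨x₁, p₁, hf₁, -, hs₁⟩ := hV.exists_optimal_utility_eq hc₁
  obtain ⟨x₂, p₂, hf₂, -, hs₂⟩ := hV.exists_optimal_utility_eq hc₂
  have hS₁ := (hV.integrable_surplus hf₁.1 hf₁.2.1).const_mul a
  have hS₂ := (hV.integrable_surplus hf₂.1 hf₂.2.1).const_mul b
  calc a • gVal μ l hb c₁ + b • gVal μ l hb c₂
      = ∫ v, v * (a * x₁ v + b * x₂ v) ∂μ := by
        rw [smul_eq_mul, smul_eq_mul, ← hs₁, ← hs₂, ← integral_const_mul, ← integral_const_mul,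
          ← integral_add hS₁ hS₂]
        congr 1; ext v; ring
    _ ≤ gVal μ l hb (a • c₁ + b • c₂) :=
        hV.le_gVal (hV.feas_mix hf₁ hf₂ ha hb' hab)

end IsValueDist

end Stmt13

open Stmt13 in
theorem stmt_13_general (l hb : ℝ) (hl : 0 ≤ l) (hlh : l ≤ hb)
    (f : ℝ → ℝ) (hfsupp : ∀ v, v ∉ Set.Icc l hb → f v = 0)
    (μ : Measure ℝ)
    (hμ : μ = MeasureTheory.volume.withDensity (fun v => ENNReal.ofReal (f v)))
    (hprob : IsProbabilityMeasure μ) :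
    -- (i) for `c ≥ E[v]`, full allocation at zero payment is optimal
    (∀ c : ℝ, (∫ v, v ∂μ) ≤ c →
      gVal μ l hb c = ∫ v, v ∂μ ∧
      Feas μ l hb c (fun _ => 1) (fun _ => 0) ∧
      (∫ v, v * (1 : ℝ) ∂μ) = gVal μ l hb c)
    -- (ii) for `0 ≤ c < E[v]`, a randomization over two posted prices with
    -- expected utility exactly `c` is optimal
    ∧ (∀ c : ℝ, 0 ≤ c → c < ∫ v, v ∂μ →
      ∃ p₁ p₂ α : ℝ, p₁ ≤ p₂ ∧ α ∈ Set.Icc (0 : ℝ) 1 ∧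
        Feas μ l hb c (stepX p₁ p₂ α) (stepP p₁ p₂ α) ∧
        (∫ v, (v * stepX p₁ p₂ α v - stepP p₁ p₂ α v) ∂μ) = c ∧
        (∫ v, v * stepX p₁ p₂ α v ∂μ) = gVal μ l hb c)
    -- (ii') if `S_U` is concave, a single posted price is optimal
    ∧ (∀ pr : ℝ → ℝ,
        (∀ c ∈ Set.Icc 0 (∫ v, v ∂μ), uPrice μ (pr c) = c) →
        ConcaveOn ℝ (Set.Icc 0 (∫ v, v ∂μ)) (fun c => sPrice μ (pr c)) →
        ∀ c : ℝ, 0 ≤ c → c < ∫ v, v ∂μ →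
        ∃ ρ : ℝ,
          Feas μ l hb c (stepX ρ ρ 1) (stepP ρ ρ 1) ∧
          (∫ v, (v * stepX ρ ρ 1 v - stepP ρ ρ 1 v) ∂μ) = c ∧
          (∫ v, v * stepX ρ ρ 1 v ∂μ) = gVal μ l hb c)
    -- (iii) in either case the bound can be attained with equality
    ∧ (∀ c : ℝ, 0 ≤ c →
      ∃ x p : ℝ → ℝ, Feas μ l hb c x p ∧
        (∫ v, (v * x v - p v) ∂μ) = c ∧ (∫ v, v * x v ∂μ) = gVal μ l hb c)
    -- (iv) `g` is concave on `[0, ∞)`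
    ∧ ConcaveOn ℝ (Set.Ici (0 : ℝ)) (gVal μ l hb) := by
  have hsupp : μ (Icc l hb)ᶜ = 0 := by
    rw [hμ, withDensity_apply _ measurableSet_Icc.compl]
    exact setLIntegral_eq_zero measurableSet_Icc.compl fun v hv => by simp [hfsupp v hv]
  have hV : IsValueDist μ l hb := ⟨hl, hlh, mem_ae_iff.2 hsupp⟩
  have : NullSingletonClass μ := hμ ▸ inferInstance
  exact ⟨fun c hc => ⟨hV.gVal_of_integral_le hc, hV.feas_one hc,
      by simp [hV.gVal_of_integral_le hc]⟩,
    fun c hc0 hcE => hV.exists_step_optimal hc0 hcE.le,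
    fun pr hpr hconc c hc0 hcE => hV.exists_posted_price_optimal hpr hconc hc0 hcE.le,
    fun c hc0 => hV.exists_optimal_utility_eq hc0, hV.concaveOn_gVal⟩

open Stmt13 in
/-- **Lemma A.1** (structure of utility-constrained surplus maximization). -/
theorem stmt_13 (l hb : ℝ) (hl : 0 ≤ l) (hlh : l ≤ hb)
    (f : ℝ → ℝ) (hf : ∀ v, 0 ≤ f v) (hfsupp : ∀ v, v ∉ Set.Icc l hb → f v = 0)
    (μ : Measure ℝ)
    (hμ : μ = MeasureTheory.volume.withDensity (fun v => ENNReal.ofReal (f v)))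
    (hprob : IsProbabilityMeasure μ) :
    -- (i) for `c ≥ E[v]`, full allocation at zero payment is optimal
    (∀ c : ℝ, (∫ v, v ∂μ) ≤ c →
      gVal μ l hb c = ∫ v, v ∂μ ∧
      Feas μ l hb c (fun _ => 1) (fun _ => 0) ∧
      (∫ v, v * (1 : ℝ) ∂μ) = gVal μ l hb c)
    -- (ii) for `0 ≤ c < E[v]`, a randomization over two posted prices with
    -- expected utility exactly `c` is optimal
    ∧ (∀ c : ℝ, 0 ≤ c → c < ∫ v, v ∂μ →
      ∃ p₁ p₂ α : ℝ, p₁ ≤ p₂ ∧ α ∈ Set.Icc (0 : ℝ) 1 ∧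
        Feas μ l hb c (stepX p₁ p₂ α) (stepP p₁ p₂ α) ∧
        (∫ v, (v * stepX p₁ p₂ α v - stepP p₁ p₂ α v) ∂μ) = c ∧
        (∫ v, v * stepX p₁ p₂ α v ∂μ) = gVal μ l hb c)
    -- (ii') if `S_U` is concave, a single posted price is optimal
    ∧ (∀ pr : ℝ → ℝ,
        (∀ c ∈ Set.Icc 0 (∫ v, v ∂μ), uPrice μ (pr c) = c) →
        ConcaveOn ℝ (Set.Icc 0 (∫ v, v ∂μ)) (fun c => sPrice μ (pr c)) →
        ∀ c : ℝ, 0 ≤ c → c < ∫ v, v ∂μ →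
        ∃ ρ : ℝ,
          Feas μ l hb c (stepX ρ ρ 1) (stepP ρ ρ 1) ∧
          (∫ v, (v * stepX ρ ρ 1 v - stepP ρ ρ 1 v) ∂μ) = c ∧
          (∫ v, v * stepX ρ ρ 1 v ∂μ) = gVal μ l hb c)
    -- (iii) in either case the bound can be attained with equality
    ∧ (∀ c : ℝ, 0 ≤ c →
      ∃ x p : ℝ → ℝ, Feas μ l hb c x p ∧
        (∫ v, (v * x v - p v) ∂μ) = c ∧ (∫ v, v * x v ∂μ) = gVal μ l hb c)
    -- (iv) `g` is concave on `[0, ∞)`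
    ∧ ConcaveOn ℝ (Set.Ici (0 : ℝ)) (gVal μ l hb) :=
  stmt_13_general l hb hl hlh f hfsupp μ hμ hprob
end

section
/- The sequential-contract mechanism for truncated equal revenue distributions (Example 1.1): Let n ≥ 1, let v_1 be drawn from the equal revenue distribution truncated at n and v_2 independently from the equal revenue distribution truncated at e^n. Consider the two-period mechanism: in period 1 the buyer reports b, receives item 1 with probability 1 and pays b, and receives a contract to get item 2 for free with probability b/(n+1); i.e., x_1(b) = 1, p_1(b) = b, x_2(b, v_2) = b/(n+1), p_2(b, v_2) = 0. Then (i) E[v_2] = n + 1, so truthful reporting in period 1 gives the buyer total expected utility v_1 regardless of the report, and the mechanism is periodic incentive compatible (truthful reporting is weakly dominant) and ex-post individually rational; (ii) its expected revenue is E[v_1] = 1 + ln n; and (iii) for each of the two distributions, the optimal revenue of a single-period IC, IR mechanism is 1, so running two such mechanisms in sequence yields revenue at most 2. -/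
/-!
Example 1.1 (the sequential-contract mechanism for truncated equal revenue
distributions): with `v₁` from the equal revenue distribution truncated at `n`
and `v₂` from the one truncated at `e^n`, the two-period mechanism
`x₁(b) = 1, p₁(b) = b, x₂(b, v₂) = b/(n+1), p₂ = 0` gives every report the
same total expected utility `v₁` (so truth-telling is optimal), is periodic
incentive compatible and ex-post individually rational, and earns expected
revenue `E[v₁] = 1 + ln n`; whereas any single-period IC, IR mechanism earns
at most `1` on either distribution (and `1` is attained by posting the price
`1`), so two sequential single-period mechanisms earn at most `2`.
-/

open MeasureTheory

namespace Stmt18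

/-- The equal revenue distribution truncated at `T`: density `1/v²` on
`[1, T)` and an atom of mass `1/T` at `T`. -/
noncomputable def truncER (T : ℝ) : Measure ℝ :=
  MeasureTheory.volume.withDensity
      (fun v => ENNReal.ofReal (if 1 ≤ v ∧ v < T then 1 / v ^ 2 else 0))
    + (ENNReal.ofReal (1 / T)) • Measure.dirac T

/-- Feasibility of a single-period mechanism on a distribution supported on
`[1, T]`: allocation probabilities, incentive compatibility, and individual
rationality. -/
def Feas (T : ℝ) (x p : ℝ → ℝ) : Prop :=
  (∀ v, x v ∈ Set.Icc (0 : ℝ) 1) ∧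
  (∀ v ∈ Set.Icc 1 T, ∀ v' ∈ Set.Icc 1 T, v * x v' - p v' ≤ v * x v - p v) ∧
  (∀ v ∈ Set.Icc 1 T, 0 ≤ v * x v - p v)

end Stmt18

open Set

/-!
For a feasible mechanism the utility `u v = v x(v) - p(v)` is convex with subgradient `x(v)`,
so wherever it has a right derivative `u'`, `(u v / v)' = (v u' - u v) / v² ≥ (v x(v) - u v) / v²
= p(v) / v²`. Integrating against the density `1 / v²` gives `∫₁ᵀ p / v² ≤ u T / T - u 1`, and
the atom contributes `p T / T = x T - u T / T`, so the revenue is at most `x T - u 1 ≤ 1`.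
The contract mechanism itself only needs `E[v] = 1 + log T` for the truncation at `T`.
-/

namespace Stmt18

lemma truncER_density_eq (T : ℝ) :
    (fun v : ℝ => ENNReal.ofReal (if 1 ≤ v ∧ v < T then 1 / v ^ 2 else 0))
      = (Ico 1 T).indicator fun v => ENNReal.ofReal (1 / v ^ 2) := by
  ext v
  by_cases hv : v ∈ Ico 1 T
  · rw [indicator_of_mem hv, if_pos (show 1 ≤ v ∧ v < T from hv)]
  · rw [indicator_of_notMem hv, if_neg (show ¬(1 ≤ v ∧ v < T) from hv), ENNReal.ofReal_zero]

lemma integral_truncER {T : ℝ} (hT : 1 ≤ T) {f : ℝ → ℝ}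
    (hf : IntegrableOn (fun v => f v / v ^ 2) (Icc 1 T)) :
    ∫ v, f v ∂truncER T = (∫ v in (1 : ℝ)..T, f v / v ^ 2) + f T / T := by
  have hdens : Measurable fun v : ℝ => ENNReal.ofReal (1 / v ^ 2) := by fun_prop
  have hfin : ∀ᵐ v ∂(volume.restrict (Ico (1 : ℝ) T)), ENNReal.ofReal (1 / v ^ 2) < ⊤ :=
    ae_of_all _ fun _ => ENNReal.ofReal_lt_top
  have hsmul : ∀ v : ℝ, (ENNReal.ofReal (1 / v ^ 2)).toReal • f v = f v / v ^ 2 := fun v => by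
    rw [ENNReal.toReal_ofReal (by positivity), smul_eq_mul]; ring
  rw [truncER, truncER_density_eq, withDensity_indicator measurableSet_Ico,
    integral_add_measure, integral_withDensity_eq_integral_toReal_smul hdens hfin,
    integral_smul_measure, integral_dirac, ENNReal.toReal_ofReal (by positivity),
    intervalIntegral.integral_of_le hT, ← integral_Ico_eq_integral_Ioc]
  · simp only [hsmul, smul_eq_mul]; ring
  · rw [integrable_withDensity_iff_integrable_smul' hdens hfin]
    simp only [hsmul]
    exact hf.mono_set Ico_subset_Icc_self
  · exact (integrable_dirac (by simp)).smul_measure ENNReal.ofReal_ne_top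

lemma continuousOn_div_sq_of_one_le {f : ℝ → ℝ} {T : ℝ} (hf : ContinuousOn f (Icc 1 T)) :
    ContinuousOn (fun v => f v / v ^ 2) (Icc 1 T) :=
  hf.div (continuousOn_pow 2) fun v hv => by have := hv.1; positivity

lemma integral_one_truncER {T : ℝ} (hT : 1 ≤ T) : ∫ _, (1 : ℝ) ∂truncER T = 1 := by
  have h0 : (0 : ℝ) ∉ uIcc 1 T := by rw [uIcc_of_le hT]; exact fun h => by linarith [h.1]
  have hint : ∫ v in (1 : ℝ)..T, 1 / v ^ 2 = 1 - 1 / T := by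
    rw [intervalIntegral.integral_congr (g := fun v : ℝ => v ^ (-2 : ℤ)) fun v _ => by
      simp [zpow_neg], integral_zpow (Or.inr ⟨by norm_num, h0⟩)]
    norm_num
    ring
  rw [integral_truncER hT, hint]
  · ring
  · exact (continuousOn_div_sq_of_one_le continuousOn_const).integrableOn_Icc

lemma integral_id_truncER {T : ℝ} (hT : 1 ≤ T) : ∫ v, v ∂truncER T = Real.log T + 1 := by
  have h0 : (0 : ℝ) ∉ uIcc 1 T := by rw [uIcc_of_le hT]; exact fun h => by linarith [h.1]
  have hint : ∫ v in (1 : ℝ)..T, v / v ^ 2 = Real.log T := by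
    rw [intervalIntegral.integral_congr (g := fun v : ℝ => v⁻¹) fun v hv => ?_,
      integral_inv h0, div_one]
    have : v ≠ 0 := fun h => h0 (h ▸ hv)
    field_simp
  rw [integral_truncER hT, hint, div_self (by positivity)]
  exact (continuousOn_div_sq_of_one_le continuousOn_id).integrableOn_Icc

def utility (x p : ℝ → ℝ) (v : ℝ) : ℝ := v * x v - p v

namespace Feas

variable {T : ℝ} {x p : ℝ → ℝ}

lemma utility_add_le (h : Feas T x p) {a b : ℝ} (ha : a ∈ Icc 1 T) (hb : b ∈ Icc 1 T) :
    utility x p a + (b - a) * x a ≤ utility x p b := by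
  have := h.2.1 b hb a ha
  unfold utility
  linarith

lemma monotoneOn_alloc (h : Feas T x p) : MonotoneOn x (Icc 1 T) := by
  intro a ha b hb hab
  rcases hab.lt_or_eq with hlt | rfl
  · nlinarith [h.utility_add_le ha hb, h.utility_add_le hb ha]
  · rfl

lemma convexOn_utility (h : Feas T x p) : ConvexOn ℝ (Icc 1 T) (utility x p) := by
  refine ⟨convex_Icc 1 T, fun a ha b hb s t hs ht hst => ?_⟩
  have hc := convex_Icc (1 : ℝ) T ha hb hs ht hst
  have hac := h.2.1 a ha _ hc
  have hbc := h.2.1 b hb _ hc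
  have hpc : p (s • a + t • b) = s * p (s • a + t • b) + t * p (s • a + t • b) := by
    rw [← add_mul, hst, one_mul]
  simp only [utility, smul_eq_mul] at *
  nlinarith [mul_le_mul_of_nonneg_left hac hs, mul_le_mul_of_nonneg_left hbc ht]

lemma lipschitzOnWith_utility (h : Feas T x p) : LipschitzOnWith 1 (utility x p) (Icc 1 T) := by
  refine LipschitzOnWith.of_dist_le_mul fun a ha b hb => ?_
  rw [Real.dist_eq, Real.dist_eq, NNReal.coe_one, one_mul, abs_le]
  have hab := h.utility_add_le hb ha
  have hba := h.utility_add_le ha hb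
  obtain ⟨hxa0, hxa1⟩ := h.1 a
  obtain ⟨hxb0, hxb1⟩ := h.1 b
  rcases le_total a b with hle | hle
  · rw [abs_of_nonpos (sub_nonpos.2 hle)]
    constructor <;> nlinarith
  · rw [abs_of_nonneg (sub_nonneg.2 hle)]
    constructor <;> nlinarith

lemma le_rightDeriv_utility (h : Feas T x p) {v : ℝ} (hv : v ∈ Ioo 1 T) :
    x v ≤ derivWithin (utility x p) (Ioi v) v := by
  have hvI : v ∈ Icc 1 T := Ioo_subset_Icc_self hv
  rw [h.convexOn_utility.rightDeriv_eq_sInf_slope_of_mem_interior (by rwa [interior_Icc])]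
  refine le_csInf ⟨_, T, ⟨⟨by linarith [hv.1, hv.2], le_rfl⟩, hv.2⟩, rfl⟩ ?_
  rintro _ ⟨w, ⟨hw, hvw⟩, rfl⟩
  rw [slope_def_field, le_div_iff₀ (sub_pos.2 hvw)]
  linarith [h.utility_add_le hvI hw]

lemma integrableOn_price_div_sq (h : Feas T x p) :
    IntegrableOn (fun v => p v / v ^ 2) (Icc 1 T) := by
  have hx : IntegrableOn (fun v => x v * v⁻¹) (Icc 1 T) :=
    (h.monotoneOn_alloc.integrableOn_isCompact isCompact_Icc).mul_continuousOn
      (continuousOn_inv₀.mono fun v hv => show v ≠ 0 by have := hv.1; positivity) isCompact_Icc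
  have hu : IntegrableOn (fun v => utility x p v / v ^ 2) (Icc 1 T) :=
    (continuousOn_div_sq_of_one_le h.lipschitzOnWith_utility.continuousOn).integrableOn_Icc
  refine (hx.sub hu).congr_fun (fun v hv => ?_) measurableSet_Icc
  have : v ≠ 0 := by have := hv.1; positivity
  simp only [Pi.sub_apply, utility]
  field_simp
  ring

lemma intervalIntegral_price_div_sq_le (h : Feas T x p) (hT : 1 ≤ T) :
    ∫ v in (1 : ℝ)..T, p v / v ^ 2 ≤ utility x p T / T - utility x p 1 := by
  rw [← div_one (utility x p 1)]
  set u := utility x p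
  refine intervalIntegral.integral_le_sub_of_hasDeriv_right_of_le hT
    (g' := fun v => (derivWithin u (Ioi v) v * v - u v * 1) / v ^ 2)
    (h.lipschitzOnWith_utility.continuousOn.div continuousOn_id fun v hv => by
      have := hv.1; positivity)
    (fun v hv => ?_) h.integrableOn_price_div_sq fun v hv => ?_
  · have hvS : v ∈ interior (Icc 1 T) := by rwa [interior_Icc]
    exact (h.convexOn_utility.hasDerivWithinAt_rightDeriv_of_mem_interior hvS).div
      (hasDerivWithinAt_id v _) (zero_lt_one.trans hv.1).ne'
  · have hv0 : 0 < v := by linarith [hv.1]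
    gcongr
    simp only [u, utility]
    nlinarith [h.le_rightDeriv_utility hv]

lemma integral_truncER_le_one (h : Feas T x p) (hT : 1 ≤ T) : ∫ v, p v ∂truncER T ≤ 1 := by
  have hIR : 0 ≤ utility x p 1 := h.2.2 1 ⟨le_rfl, hT⟩
  rw [integral_truncER hT h.integrableOn_price_div_sq]
  have hpT : p T / T = x T - utility x p T / T := by
    simp only [utility]; field_simp; ring
  have := h.intervalIntegral_price_div_sq_le hT
  linarith [(h.1 T).2]

end Feas

lemma feas_const_one (T : ℝ) : Feas T (fun _ => 1) (fun _ => 1) :=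
  ⟨fun _ => ⟨zero_le_one, le_rfl⟩, fun _ _ _ _ => le_rfl, fun _ hv => by simpa using hv.1⟩

end Stmt18

open Stmt18 in
/-- **Example 1.1** (the sequential-contract mechanism beats any sequence of
single-period mechanisms on truncated equal revenue distributions). -/
theorem stmt_18 (n : ℝ) (hn : 1 ≤ n) :
    -- (i) `E[v₂] = n + 1` …
    (∫ v, v ∂(truncER (Real.exp n))) = n + 1
    -- … hence every report `b` yields total expected utility `v₁`
    ∧ (∀ v₁ b : ℝ,
        (v₁ * 1 - b) + (b / (n + 1)) * (∫ v, v ∂(truncER (Real.exp n))) = v₁)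
    -- first-period periodic incentive compatibility (truthfulness is optimal)
    ∧ (∀ v₁ ∈ Set.Icc 1 n, ∀ b ∈ Set.Icc 1 n,
        (v₁ * 1 - b) + (b / (n + 1)) * (∫ v, v ∂(truncER (Real.exp n)))
          ≤ (v₁ * 1 - v₁) + (v₁ / (n + 1)) * (∫ v, v ∂(truncER (Real.exp n))))
    -- second-period incentive compatibility (the report is not used)
    ∧ (∀ b : ℝ, ∀ v₂ ∈ Set.Icc 1 (Real.exp n), ∀ v₂' ∈ Set.Icc 1 (Real.exp n),
        v₂ * (b / (n + 1)) - 0 ≤ v₂ * (b / (n + 1)) - 0)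
    -- ex-post individual rationality of both stages under truthful reporting
    ∧ (∀ v₁ ∈ Set.Icc 1 n, 0 ≤ v₁ * 1 - v₁)
    ∧ (∀ v₁ ∈ Set.Icc 1 n, ∀ v₂ ∈ Set.Icc 1 (Real.exp n),
        0 ≤ v₂ * (v₁ / (n + 1)) - 0)
    -- (ii) the expected revenue of the mechanism is `E[v₁] = 1 + ln n`
    ∧ (∫ v, (v + 0) ∂(truncER n)) = 1 + Real.log n
    -- (iii) every single-period IC, IR mechanism earns at most `1` on either
    -- distribution, and posting the price `1` earns exactly `1`
    ∧ (∀ x p : ℝ → ℝ, Feas n x p → (∫ v, p v ∂(truncER n)) ≤ 1)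
    ∧ (∀ x p : ℝ → ℝ, Feas (Real.exp n) x p →
        (∫ v, p v ∂(truncER (Real.exp n))) ≤ 1)
    ∧ Feas n (fun _ => 1) (fun _ => 1)
    ∧ Feas (Real.exp n) (fun _ => 1) (fun _ => 1)
    ∧ (∫ v, (1 : ℝ) ∂(truncER n)) = 1
    ∧ (∫ v, (1 : ℝ) ∂(truncER (Real.exp n))) = 1
    -- hence two sequential single-period mechanisms earn at most `2`
    ∧ (∀ x p x' p' : ℝ → ℝ, Feas n x p → Feas (Real.exp n) x' p' →
        (∫ v, p v ∂(truncER n)) + (∫ v, p' v ∂(truncER (Real.exp n))) ≤ 2) := by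
  have hen : 1 ≤ Real.exp n := Real.one_le_exp (by linarith)
  have hE₂ : ∫ v, v ∂truncER (Real.exp n) = n + 1 := by
    rw [integral_id_truncER hen, Real.log_exp]
  have hutility : ∀ v₁ b : ℝ,
      (v₁ * 1 - b) + (b / (n + 1)) * (∫ v, v ∂(truncER (Real.exp n))) = v₁ := fun v₁ b => by
    rw [hE₂, div_mul_cancel₀ _ (by linarith)]
    ring
  refine ⟨hE₂, hutility, fun v₁ _ b _ => by rw [hutility, hutility], fun _ _ _ _ _ => le_rfl,
    fun _ _ => by simp, fun v₁ hv₁ v₂ hv₂ => ?_, ?_, fun _ _ h => h.integral_truncER_le_one hn,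
    fun _ _ h => h.integral_truncER_le_one hen, feas_const_one n, feas_const_one _,
    integral_one_truncER hn, integral_one_truncER hen, fun _ _ _ _ h h' => ?_⟩
  · rw [sub_zero]
    exact mul_nonneg (by linarith [hv₂.1]) (div_nonneg (by linarith [hv₁.1]) (by linarith))
  · rw [integral_congr_ae (ae_of_all _ fun v => add_zero v), integral_id_truncER hn, add_comm]
  · linarith [h.integral_truncER_le_one hn, h'.integral_truncER_le_one hen]
end

section
/- Surplus-utility tradeoff for the equal revenue distribution (Example 3.2): Let v be drawn from the equal revenue distribution (density 1/v² on [1, ∞)), and let the tradeoff function be g(u) = −u + h(u) for u ≥ 0 and g(u) = −∞ for u < 0, where h : [0, ∞) → [0, ∞) is differentiable with 0 ≤ h'(u) ≤ 1 for all u ≥ 0. Then the supremum (in the extended reals) over IC mechanisms (x, p) of E_v[v x(v) + g(v x(v) − p(v))] equals E_v[h(v − 1)] + 1, and it is attained by posting the price 1, i.e., by x ≡ 1 and p ≡ 1. -/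
/-!
Example 3.2 (surplus-utility tradeoff for the equal revenue distribution): for
the equal revenue distribution (density `1/v²` on `[1, ∞)`) and the tradeoff
function `g(u) = -u + h(u)` for `u ≥ 0` (`-∞` for `u < 0`), where
`h : [0,∞) → [0,∞)` is differentiable with `0 ≤ h' ≤ 1`, the supremum (in the
extended reals) of `E[v x(v) + g(v x(v) - p(v))]` over IC mechanisms equals
`E[h(v - 1)] + 1`, and it is attained by posting the price `1`.
-/

open MeasureTheory
open scoped ENNReal

namespace Stmt19

/-- The positive part of an extended real, as an extended non-negative real. -/
noncomputable def epos (a : EReal) : ℝ≥0∞ :=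
  if a = ⊤ then ⊤ else ENNReal.ofReal a.toReal

/-- Signed integral of an extended-real-valued function: `⊥` whenever the
negative part has infinite integral (in particular whenever the function takes
the value `⊥` on a set of positive measure), and the difference of the
integrals of the positive and negative parts otherwise (possibly `⊤`). -/
noncomputable def eInt (μ : Measure ℝ) (φ : ℝ → EReal) : EReal :=
  if (∫⁻ v, epos (-(φ v)) ∂μ) = ⊤ then ⊥
  else ((∫⁻ v, epos (φ v) ∂μ : ℝ≥0∞) : EReal)
      - (((∫⁻ v, epos (-(φ v)) ∂μ).toReal : ℝ) : EReal)

/-- The equal revenue distribution: density `1/v²` on `[1, ∞)`. -/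
noncomputable def equalRev : Measure ℝ :=
  MeasureTheory.volume.withDensity
    (fun v => ENNReal.ofReal (if 1 ≤ v then 1 / v ^ 2 else 0))

/-- The tradeoff function `g(u) = -u + h(u)` for `u ≥ 0`, `-∞` for `u < 0`. -/
noncomputable def gTrade (h : ℝ → ℝ) (u : ℝ) : EReal :=
  if 0 ≤ u then (((-u + h u : ℝ)) : EReal) else ⊥

/-- The surplus-utility-tradeoff objective `E[v x(v) + g(v x(v) - p(v))]`. -/
noncomputable def obj (h : ℝ → ℝ) (x p : ℝ → ℝ) : EReal :=
  eInt equalRev (fun v => ((v * x v : ℝ) : EReal) + gTrade h (v * x v - p v))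

/-- Feasibility: allocation probabilities and IC on the support `[1, ∞)`. -/
def Feas (x p : ℝ → ℝ) : Prop :=
  (∀ v, x v ∈ Set.Icc (0 : ℝ) 1) ∧
  (∀ v ∈ Set.Ici (1 : ℝ), ∀ v' ∈ Set.Ici (1 : ℝ), v * x v' - p v' ≤ v * x v - p v)

end Stmt19

/-!
The utility `u(v) = v x(v) - p(v)` of an IC mechanism grows at a rate between `x(v)` and `1`.
If it is negative somewhere, it is negative on an interval, and the objective is `-∞`.
Otherwise, since `h` is monotone with slope at most one, `-u + h(u) ≤ h(v - 1) - min(u, v - 1)`,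
and the envelope inequality `u(v) ≥ ∫₁ᵛ x` bounds the integrand by
`h(v - 1) + v x(v) - ∫₁ᵛ x`. Divided by `v²`, the last term is at most the right derivative of
`(∫₁ᵛ x) / v ≤ 1`, so its expectation is at most `1`: the value of posting the price `1`.
-/

open MeasureTheory Set Filter Topology intervalIntegral
open scoped ENNReal

theorem MonotoneOn.integral_le_sub_mul_right {q : ℝ → ℝ} {a b : ℝ} (hab : a ≤ b)
    (hq : MonotoneOn q (Icc a b)) : ∫ t in a..b, q t ≤ (b - a) * q b := by
  calc ∫ t in a..b, q t ≤ ∫ _ in a..b, q b :=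
        integral_mono_on hab (uIcc_of_le hab ▸ hq).intervalIntegrable intervalIntegrable_const
          fun t ht => hq ht (right_mem_Icc.2 hab) ht.2
    _ = (b - a) * q b := by rw [intervalIntegral.integral_const, smul_eq_mul]

/-- Left and right Riemann sums of `q` on `n + 1` equal steps differ by
`(b - a) * (q b - q a) / (n + 1)`. -/
theorem integral_le_sub_add_of_add_mul_le {q U : ℝ → ℝ} {a b : ℝ} (hab : a ≤ b)
    (hq : MonotoneOn q (Icc a b))
    (hU : ∀ w ∈ Icc a b, ∀ v ∈ Icc a b, w ≤ v → U w + (v - w) * q w ≤ U v) (n : ℕ) :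
    ∫ t in a..b, q t ≤ U b - U a + (b - a) * (q b - q a) * (1 / ((n : ℝ) + 1)) := by
  set Δ := (b - a) / ((n : ℝ) + 1) with hΔ
  set s : ℕ → ℝ := fun k => a + k * Δ
  have hΔ0 : 0 ≤ Δ := div_nonneg (sub_nonneg.2 hab) (by positivity)
  have hsa : s 0 = a := by simp [s]
  have hsb : s (n + 1) = b := by simp only [s, hΔ]; push_cast; field_simp; ring
  have hs_succ : ∀ k, s (k + 1) = s k + Δ := fun k => by simp only [s]; push_cast; ring
  have hs_mem : ∀ k ≤ n + 1, s k ∈ Icc a b := by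
    intro k hk
    refine ⟨le_add_of_nonneg_right (by positivity), ?_⟩
    rw [← hsb]
    simp only [s]
    gcongr
  have hstep : ∀ k < n + 1, Icc (s k) (s (k + 1)) ⊆ Icc a b := fun k hk =>
    Icc_subset_Icc (hs_mem k hk.le).1 (hs_mem (k + 1) hk).2
  have hsk : ∀ k, s k ≤ s (k + 1) := fun k => by rw [hs_succ]; linarith
  calc ∫ t in a..b, q t = ∑ k ∈ Finset.range (n + 1), ∫ t in s k..s (k + 1), q t := by
        rw [← hsa, ← hsb]
        exact (sum_integral_adjacent_intervals fun k hk =>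
          (uIcc_of_le (hsk k) ▸ hq.mono (hstep k hk)).intervalIntegrable).symm
    _ ≤ ∑ k ∈ Finset.range (n + 1), Δ * q (s (k + 1)) := by
        refine Finset.sum_le_sum fun k hk => ?_
        have := (hq.mono (hstep k (Finset.mem_range.1 hk))).integral_le_sub_mul_right (hsk k)
        rwa [hs_succ, add_sub_cancel_left, ← hs_succ] at this
    _ = ∑ k ∈ Finset.range (n + 1), Δ * q (s k) + Δ * (q b - q a) := by
        rw [← hsa, ← hsb, ← Finset.sum_range_sub (fun k => q (s k)), Finset.mul_sum,
          ← Finset.sum_add_distrib]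
        exact Finset.sum_congr rfl fun k _ => by ring
    _ ≤ ∑ k ∈ Finset.range (n + 1), (U (s (k + 1)) - U (s k)) + Δ * (q b - q a) := by
        gcongr with k hk
        have hk := Finset.mem_range.1 hk
        have := hU _ (hs_mem k hk.le) _ (hs_mem (k + 1) hk) (hsk k)
        rw [hs_succ] at this ⊢
        linarith
    _ = U b - U a + (b - a) * (q b - q a) * (1 / ((n : ℝ) + 1)) := by
        rw [Finset.sum_range_sub (fun k => U (s k)), hsa, hsb, hΔ]
        ring

theorem integral_le_sub_of_add_mul_le {q U : ℝ → ℝ} {a b : ℝ} (hab : a ≤ b)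
    (hq : MonotoneOn q (Icc a b))
    (hU : ∀ w ∈ Icc a b, ∀ v ∈ Icc a b, w ≤ v → U w + (v - w) * q w ≤ U v) :
    ∫ t in a..b, q t ≤ U b - U a := by
  have hlim : Tendsto (fun n : ℕ => U b - U a + (b - a) * (q b - q a) * (1 / ((n : ℝ) + 1)))
      atTop (𝓝 (U b - U a)) := by
    simpa using tendsto_const_nhds.add
      (tendsto_const_nhds.mul (tendsto_one_div_add_atTop_nhds_zero_nat (𝕜 := ℝ)))
  exact ge_of_tendsto' hlim (integral_le_sub_add_of_add_mul_le hab hq hU)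

theorem Monotone.hasDerivWithinAt_integral_Ici {q : ℝ → ℝ} (hq : Monotone q) (a t : ℝ) :
    HasDerivWithinAt (fun r => ∫ s in a..r, q s) (sInf (q '' Ioi t)) (Ici t) t :=
  integral_hasDerivWithinAt_of_tendsto_ae_right (hq.intervalIntegrable) (s := Ici t)
    (t := Ioi t) ⟨univ, univ_mem, hq.measurable.aestronglyMeasurable⟩
    ((hq.tendsto_nhdsGT t).mono_left inf_le_left)

theorem Monotone.intervalIntegrable_mul_sub_integral_div_sq {q : ℝ → ℝ} (hq : Monotone q)
    {a T : ℝ} (ha : 0 < a) (haT : a ≤ T) :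
    IntervalIntegrable (fun t => (t * q t - ∫ s in a..t, q s) / t ^ 2) volume a T := by
  have hX := continuous_primitive (μ := volume) (fun _ _ => hq.intervalIntegrable) a
  refine ((hq.intervalIntegrable.continuousOn_mul continuousOn_id).sub
    (hX.intervalIntegrable a T)).mul_continuousOn ?_
  exact (continuousOn_pow 2).inv₀ fun _ ht =>
    pow_ne_zero 2 (ha.trans_le (uIcc_of_le haT ▸ ht).1).ne'

/-- The integrand is the right derivative of `t ↦ (∫ s in a..t, q s) / t` up to replacing `q t`
by its right limit, which can only increase it. -/
theorem Monotone.integral_mul_sub_integral_div_sq_le {q : ℝ → ℝ} (hq : Monotone q) {a T : ℝ}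
    (ha : 0 < a) (haT : a ≤ T) :
    ∫ t in a..T, (t * q t - ∫ s in a..t, q s) / t ^ 2 ≤ (∫ s in a..T, q s) / T := by
  set X : ℝ → ℝ := fun r => ∫ s in a..r, q s
  have hX : Continuous X := continuous_primitive (fun _ _ => hq.intervalIntegrable) a
  have hpos : ∀ t ∈ Icc a T, t ≠ 0 := fun t ht => (ha.trans_le ht.1).ne'
  have key := integral_le_sub_of_hasDeriv_right_of_le haT
    (hX.continuousOn.div continuousOn_id hpos)
    (fun t ht => ((hq.hasDerivWithinAt_integral_Ici a t).mono Ioi_subset_Ici_self).div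
      (hasDerivWithinAt_id t (Ioi t)) (hpos t (Ioo_subset_Icc_self ht)))
    ((intervalIntegrable_iff_integrableOn_Icc_of_le haT).1
      (hq.intervalIntegrable_mul_sub_integral_div_sq ha haT))
    (fun t ht => by
      have hq_le : q t ≤ sInf (q '' Ioi t) :=
        le_csInf (nonempty_Ioi.image q) (forall_mem_image.2 fun s hs => hq (le_of_lt hs))
      have ht0 : 0 < t := ha.trans ht.1
      simp only [id_eq, mul_one]
      exact div_le_div_of_nonneg_right (by nlinarith) (by positivity))
  simpa [X] using key

theorem sub_le_sub_min_of_hasDerivWithinAt {h h' : ℝ → ℝ}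
    (hderiv : ∀ u ∈ Ici (0 : ℝ), HasDerivWithinAt h (h' u) (Ici 0) u)
    (hslope : ∀ u ∈ Ici (0 : ℝ), h' u ∈ Icc (0 : ℝ) 1) {u c : ℝ} (hu : 0 ≤ u) (hc : 0 ≤ c) :
    h u - u ≤ h c - min u c := by
  have hd : ∀ y ∈ interior (Ici (0 : ℝ)), HasDerivWithinAt h (h' y) (interior (Ici 0)) y :=
    fun y hy => (hderiv y (interior_subset hy)).mono interior_subset
  have hcont : ContinuousOn h (Ici 0) := fun y hy => (hderiv y hy).continuousWithinAt
  have hmono : MonotoneOn h (Ici 0) :=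
    monotoneOn_of_hasDerivWithinAt_nonneg (convex_Ici 0) hcont hd
      fun y hy => (hslope y (interior_subset hy)).1
  have hanti : AntitoneOn (fun y => h y - y) (Ici 0) :=
    antitoneOn_of_hasDerivWithinAt_nonpos (convex_Ici 0) (hcont.sub continuousOn_id)
      (fun y hy => (hd y hy).sub (hasDerivWithinAt_id y _))
      fun y hy => sub_nonpos.2 (hslope y (interior_subset hy)).2
  rcases le_total u c with huc | hcu
  · rw [min_eq_left huc]
    linarith [hmono hu hc huc]
  · rw [min_eq_right hcu]
    exact hanti hc hu hcu

namespace Stmt19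

theorem equalRev_eq :
    equalRev = (volume.restrict (Ioi 1)).withDensity fun v => ENNReal.ofReal (1 / v ^ 2) := by
  rw [Measure.restrict_congr_set Ioi_ae_eq_Ici, ← withDensity_indicator measurableSet_Ici, equalRev]
  congr 1
  funext v
  by_cases hv : 1 ≤ v <;> simp [hv]

theorem lintegral_equalRev (f : ℝ → ℝ≥0∞) :
    ∫⁻ v, f v ∂equalRev = ∫⁻ v in Ioi 1, ENNReal.ofReal (1 / v ^ 2) * f v := by
  rw [equalRev_eq, lintegral_withDensity_eq_lintegral_mul_non_measurable _ (by fun_prop)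
    (ae_of_all _ fun _ => ENNReal.ofReal_lt_top)]
  rfl

theorem ae_one_lt_equalRev : ∀ᵐ v ∂equalRev, 1 < v := by
  rw [equalRev_eq]
  exact (withDensity_absolutelyContinuous _ _).ae_le (ae_restrict_mem measurableSet_Ioi)

theorem lintegral_Ioi_one_div_sq : ∫⁻ v in Ioi (1 : ℝ), ENNReal.ofReal (1 / v ^ 2) = 1 := by
  have hderiv : ∀ x ∈ Ici (1 : ℝ), HasDerivAt (fun v => -v⁻¹) (1 / x ^ 2) x := fun x hx => by
    simpa [one_div] using (hasDerivAt_inv (x := x) (zero_lt_one.trans_le hx).ne').fun_neg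
  have hnonneg : ∀ x ∈ Ioi (1 : ℝ), 0 ≤ 1 / x ^ 2 := fun x _ => by positivity
  have hlim : Tendsto (fun v : ℝ => -v⁻¹) atTop (𝓝 0) := by
    simpa using (tendsto_inv_atTop_zero (𝕜 := ℝ)).neg
  rw [← ofReal_integral_eq_lintegral_ofReal
      (integrableOn_Ioi_deriv_of_nonneg' hderiv hnonneg hlim)
      ((ae_restrict_iff' measurableSet_Ioi).2 (ae_of_all _ hnonneg)),
    integral_Ioi_of_hasDerivAt_of_nonneg' hderiv hnonneg hlim]
  norm_num

instance : IsProbabilityMeasure equalRev :=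
  ⟨by rw [equalRev_eq, withDensity_apply _ MeasurableSet.univ, Measure.restrict_univ,
    lintegral_Ioi_one_div_sq]⟩

theorem equalRev_Icc_ne_zero {a b : ℝ} (ha : 1 ≤ a) (hab : a < b) : equalRev (Icc a b) ≠ 0 := by
  rw [equalRev_eq, withDensity_apply _ measurableSet_Icc,
    Measure.restrict_restrict measurableSet_Icc, ← pos_iff_ne_zero,
    setLIntegral_pos_iff (by fun_prop)]
  refine ((Measure.measure_Ioo_pos volume).2 hab).trans_le
    (measure_mono fun v hv => ⟨?_, Ioo_subset_Icc_self hv, ha.trans_lt hv.1⟩)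
  have hv0 : 0 < v := zero_lt_one.trans (ha.trans_lt hv.1)
  simp only [Function.mem_support, ne_eq, ENNReal.ofReal_eq_zero, not_le]
  positivity

theorem lintegral_equalRev_mul_sub_integral_le_one {q : ℝ → ℝ} (hq : Monotone q)
    (hq0 : ∀ t, 0 ≤ q t) (hq1 : ∀ t, q t ≤ 1) :
    ∫⁻ v, ENNReal.ofReal (v * q v - ∫ s in 1..v, q s) ∂equalRev ≤ 1 := by
  have hX_le : ∀ v, 1 ≤ v → ∫ s in 1..v, q s ≤ (v - 1) * q v := fun v hv =>
    hq.monotoneOn _ |>.integral_le_sub_mul_right hv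
  have hUnion : ⋃ n : ℕ, Ioc 1 ((n : ℝ) + 1) = Ioi 1 :=
    iUnion_Ioc_eq_Ioi_self_iff.2 fun x _ =>
      ⟨⌈x⌉₊, (Nat.le_ceil x).trans (le_add_of_nonneg_right zero_le_one)⟩
  have hdiv : ∀ v ∈ Ioi (1 : ℝ), ENNReal.ofReal (1 / v ^ 2) *
      ENNReal.ofReal (v * q v - ∫ s in 1..v, q s) =
      ENNReal.ofReal ((v * q v - ∫ s in 1..v, q s) / v ^ 2) := fun v _ => by
    rw [← ENNReal.ofReal_mul (by positivity), one_div_mul_eq_div]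
  rw [lintegral_equalRev, setLIntegral_congr_fun measurableSet_Ioi hdiv, ← hUnion,
    setLIntegral_iUnion_of_directed _ (Monotone.directed_le fun m n hmn =>
      Ioc_subset_Ioc_right (by gcongr))]
  refine iSup_le fun n => ?_
  have hT : (1 : ℝ) ≤ n + 1 := le_add_of_nonneg_left n.cast_nonneg
  have hnonneg : ∀ v ∈ Ioc (1 : ℝ) (n + 1), 0 ≤ (v * q v - ∫ s in 1..v, q s) / v ^ 2 :=
    fun v hv => div_nonneg (by nlinarith [hX_le v hv.1.le, hq0 v]) (sq_nonneg v)
  rw [← ofReal_integral_eq_lintegral_ofReal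
      ((intervalIntegrable_iff_integrableOn_Ioc_of_le hT).1
        (hq.intervalIntegrable_mul_sub_integral_div_sq one_pos hT))
      ((ae_restrict_iff' measurableSet_Ioc).2 (ae_of_all _ hnonneg)),
    ← integral_of_le hT, ← ENNReal.ofReal_one]
  refine ENNReal.ofReal_le_ofReal ((hq.integral_mul_sub_integral_div_sq_le one_pos hT).trans ?_)
  rw [div_le_one (by positivity)]
  nlinarith [hX_le _ hT, hq1 (n + 1)]

theorem epos_coe (r : ℝ) : epos r = ENNReal.ofReal r := by
  simp [epos]

theorem epos_neg_of_nonneg {a : EReal} (ha : 0 ≤ a) : epos (-a) = 0 := by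
  rw [epos, if_neg (EReal.neg_eq_top_iff.not.2 (ne_bot_of_le_ne_bot EReal.zero_ne_bot ha)),
    ENNReal.ofReal_eq_zero]
  exact EReal.toReal_nonpos (EReal.neg_le_zero.2 ha)

theorem eInt_congr_ae {μ : Measure ℝ} {φ ψ : ℝ → EReal} (hφψ : φ =ᵐ[μ] ψ) :
    eInt μ φ = eInt μ ψ := by
  have hpos : ∫⁻ v, epos (φ v) ∂μ = ∫⁻ v, epos (ψ v) ∂μ :=
    lintegral_congr_ae (hφψ.mono fun _ hv => congrArg epos hv)
  have hneg : ∫⁻ v, epos (-φ v) ∂μ = ∫⁻ v, epos (-ψ v) ∂μ :=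
    lintegral_congr_ae (hφψ.mono fun _ hv => congrArg (fun a => epos (-a)) hv)
  rw [eInt, eInt, hpos, hneg]

theorem eInt_of_ae_nonneg {μ : Measure ℝ} {φ : ℝ → EReal} (hφ : ∀ᵐ v ∂μ, 0 ≤ φ v) :
    eInt μ φ = ∫⁻ v, epos (φ v) ∂μ := by
  have hneg : ∫⁻ v, epos (-φ v) ∂μ = 0 :=
    (lintegral_congr_ae (hφ.mono fun _ hv => epos_neg_of_nonneg hv)).trans lintegral_zero
  simp [eInt, hneg]

theorem eInt_le_lintegral_epos (μ : Measure ℝ) (φ : ℝ → EReal) :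
    eInt μ φ ≤ ∫⁻ v, epos (φ v) ∂μ := by
  rw [eInt]
  split_ifs
  · exact bot_le
  · simpa using EReal.sub_le_sub (le_refl ((∫⁻ v, epos (φ v) ∂μ : ℝ≥0∞) : EReal))
      (EReal.coe_nonneg.2 ENNReal.toReal_nonneg)

theorem eInt_eq_bot_of_eq_bot_on {μ : Measure ℝ} {φ : ℝ → EReal} {s : Set ℝ}
    (hs : MeasurableSet s) (hμs : μ s ≠ 0) (hφ : ∀ v ∈ s, φ v = ⊥) : eInt μ φ = ⊥ := by
  refine if_pos (eq_top_iff.2 ?_)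
  calc (⊤ : ℝ≥0∞) = ∫⁻ _ in s, ⊤ ∂μ := by rw [setLIntegral_const, ENNReal.top_mul hμs]
    _ = ∫⁻ v in s, epos (-φ v) ∂μ :=
        setLIntegral_congr_fun hs fun v hv => by simp [hφ v hv, epos]
    _ ≤ ∫⁻ v, epos (-φ v) ∂μ := setLIntegral_le_lintegral s _

def utility (x p : ℝ → ℝ) (v : ℝ) : ℝ := v * x v - p v

namespace Feas

variable {x p : ℝ → ℝ} (hF : Feas x p)
include hF

theorem utility_add_mul_le {w v : ℝ} (hw : 1 ≤ w) (hv : 1 ≤ v) :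
    utility x p w + (v - w) * x w ≤ utility x p v := by
  have := hF.2 v hv w hw
  simp only [utility]
  linarith

theorem monotoneOn : MonotoneOn x (Ici 1) := fun w hw v hv hwv => by
  rcases hwv.eq_or_lt with rfl | hlt
  · exact le_rfl
  · have h₁ := hF.utility_add_mul_le hw hv
    have h₂ := hF.utility_add_mul_le hv hw
    nlinarith

theorem utility_sub_le {w v : ℝ} (hw : 1 ≤ w) (hwv : w ≤ v) :
    utility x p v - utility x p w ≤ v - w := by
  have := hF.utility_add_mul_le (hw.trans hwv) hw
  nlinarith [(hF.1 v).2]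

theorem monotone_comp_max : Monotone fun t => x (max t 1) := fun a b hab =>
  hF.monotoneOn (le_max_right a 1) (le_max_right b 1) (max_le_max hab le_rfl)

theorem integral_le_utility_sub {v : ℝ} (hv : 1 ≤ v) :
    ∫ s in 1..v, x (max s 1) ≤ utility x p v - utility x p 1 :=
  integral_le_sub_of_add_mul_le hv (hF.monotone_comp_max.monotoneOn _) fun w hw v' hv' _ => by
    rw [max_eq_left hw.1]
    exact hF.utility_add_mul_le hw.1 hv'.1

end Feas

section Objective

variable {h : ℝ → ℝ}

theorem eInt_equalRev_comp_sub_one (hnonneg : ∀ u ∈ Ici (0 : ℝ), 0 ≤ h u) :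
    eInt equalRev (fun v => ((h (v - 1) : ℝ) : EReal))
      = ∫⁻ v, ENNReal.ofReal (h (v - 1)) ∂equalRev := by
  rw [eInt_of_ae_nonneg (ae_one_lt_equalRev.mono fun v hv =>
    EReal.coe_nonneg.2 (hnonneg _ (sub_nonneg.2 hv.le)))]
  simp_rw [epos_coe]

theorem obj_const_one (hnonneg : ∀ u ∈ Ici (0 : ℝ), 0 ≤ h u) :
    obj h (fun _ => 1) (fun _ => 1) = ↑(∫⁻ v, ENNReal.ofReal (h (v - 1)) ∂equalRev) + 1 := by
  have hφ : ∀ᵐ v ∂equalRev,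
      ((v * 1 : ℝ) : EReal) + gTrade h (v * 1 - 1) = ((1 + h (v - 1) : ℝ) : EReal) :=
    ae_one_lt_equalRev.mono fun v hv => by
      rw [gTrade, if_pos (by linarith), ← EReal.coe_add]
      ring_nf
  have hpos : ∀ᵐ v ∂equalRev, 0 ≤ h (v - 1) :=
    ae_one_lt_equalRev.mono fun v hv => hnonneg _ (sub_nonneg.2 hv.le)
  rw [obj, eInt_congr_ae hφ,
    eInt_of_ae_nonneg (hpos.mono fun _ hv => EReal.coe_nonneg.2 (by linarith)),
    lintegral_congr_ae (hpos.mono fun v hv => by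
      rw [epos_coe, ENNReal.ofReal_add zero_le_one hv, ENNReal.ofReal_one]),
    lintegral_add_left measurable_const, lintegral_const, measure_univ, mul_one, add_comm,
    EReal.coe_ennreal_add, EReal.coe_ennreal_one]

theorem obj_eq_bot_of_utility_neg {x p : ℝ → ℝ} (hF : Feas x p) {v₀ : ℝ} (hv₀ : 1 ≤ v₀)
    (hneg : utility x p v₀ < 0) : obj h x p = ⊥ := by
  -- utility grows at rate at most one, so it stays negative on a whole interval above `v₀`
  refine eInt_eq_bot_of_eq_bot_on measurableSet_Icc
    (equalRev_Icc_ne_zero (b := v₀ - utility x p v₀ / 2) hv₀ (by linarith)) fun v hv => ?_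
  have hv_neg : utility x p v < 0 := by linarith [hF.utility_sub_le hv₀ hv.1, hv.2]
  rw [gTrade, if_neg (show ¬ 0 ≤ v * x v - p v from hv_neg.not_ge)]
  exact EReal.add_bot _

theorem obj_le_of_utility_nonneg {h' x p : ℝ → ℝ}
    (hderiv : ∀ u ∈ Ici (0 : ℝ), HasDerivWithinAt h (h' u) (Ici 0) u)
    (hslope : ∀ u ∈ Ici (0 : ℝ), h' u ∈ Icc (0 : ℝ) 1) (hF : Feas x p)
    (hu : ∀ v, 1 ≤ v → 0 ≤ utility x p v) :
    obj h x p ≤ ↑(∫⁻ v, ENNReal.ofReal (h (v - 1)) ∂equalRev) + 1 := by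
  set q := fun t => x (max t 1)
  have hq : Monotone q := hF.monotone_comp_max
  have hbound : ∀ᵐ v ∂equalRev, epos (((v * x v : ℝ) : EReal) + gTrade h (v * x v - p v))
      ≤ ENNReal.ofReal (h (v - 1)) + ENNReal.ofReal (v * q v - ∫ s in 1..v, q s) := by
    filter_upwards [ae_one_lt_equalRev] with v hv
    have hqv : q v = x v := by simp only [q, max_eq_left hv.le]
    have hX_le_utility : ∫ s in 1..v, q s ≤ utility x p v - utility x p 1 :=
      hF.integral_le_utility_sub hv.le
    have hX_le : ∫ s in 1..v, q s ≤ (v - 1) * q v :=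
      (hq.monotoneOn _).integral_le_sub_mul_right hv.le
    have htrade := sub_le_sub_min_of_hasDerivWithinAt hderiv hslope (hu v hv.le)
      (sub_nonneg.2 hv.le)
    have hX_le_min : ∫ s in 1..v, q s ≤ min (utility x p v) (v - 1) :=
      le_min (by linarith [hu 1 le_rfl]) (by nlinarith [(hF.1 v).2])
    rw [gTrade, if_pos (show 0 ≤ v * x v - p v from hu v hv.le), ← EReal.coe_add, epos_coe]
    refine (ENNReal.ofReal_le_ofReal ?_).trans ENNReal.ofReal_add_le
    simp only [utility] at htrade hX_le_min
    rw [hqv]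
    linarith
  have hmeas : AEMeasurable (fun v => ENNReal.ofReal (v * q v - ∫ s in 1..v, q s)) equalRev :=
    (ENNReal.measurable_ofReal.comp ((measurable_id.mul hq.measurable).sub
      (continuous_primitive (fun _ _ => hq.intervalIntegrable) 1).measurable)).aemeasurable
  calc obj h x p ≤ ↑(∫⁻ v, epos (((v * x v : ℝ) : EReal) + gTrade h (v * x v - p v)) ∂equalRev) :=
        eInt_le_lintegral_epos _ _
    _ ≤ ↑(∫⁻ v, ENNReal.ofReal (h (v - 1)) ∂equalRev
          + ∫⁻ v, ENNReal.ofReal (v * q v - ∫ s in 1..v, q s) ∂equalRev) := by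
        rw [EReal.coe_ennreal_le_coe_ennreal_iff, ← lintegral_add_right' _ hmeas]
        exact lintegral_mono_ae hbound
    _ ≤ ↑(∫⁻ v, ENNReal.ofReal (h (v - 1)) ∂equalRev + 1) :=
        EReal.coe_ennreal_le_coe_ennreal_iff.2 (add_le_add_right
          (lintegral_equalRev_mul_sub_integral_le_one hq (fun _ => (hF.1 _).1)
            fun _ => (hF.1 _).2) _)
    _ = ↑(∫⁻ v, ENNReal.ofReal (h (v - 1)) ∂equalRev) + 1 := by
        rw [EReal.coe_ennreal_add, EReal.coe_ennreal_one]

end Objective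

end Stmt19

open Stmt19 in
/-- **Example 3.2** (the surplus-utility tradeoff for the equal revenue
distribution is solved by posting the price `1`). -/
theorem stmt_19 (h h' : ℝ → ℝ)
    (hderiv : ∀ u ∈ Set.Ici (0 : ℝ), HasDerivWithinAt h (h' u) (Set.Ici 0) u)
    (hslope : ∀ u ∈ Set.Ici (0 : ℝ), h' u ∈ Set.Icc (0 : ℝ) 1)
    (hnonneg : ∀ u ∈ Set.Ici (0 : ℝ), 0 ≤ h u) :
    sSup {r : EReal | ∃ x p : ℝ → ℝ, Feas x p ∧ r = obj h x p}
        = eInt equalRev (fun v => ((h (v - 1) : ℝ) : EReal)) + 1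
    ∧ obj h (fun _ => 1) (fun _ => 1)
        = eInt equalRev (fun v => ((h (v - 1) : ℝ) : EReal)) + 1 := by
  have hpost : obj h (fun _ => 1) (fun _ => 1)
      = eInt equalRev (fun v => ((h (v - 1) : ℝ) : EReal)) + 1 := by
    rw [eInt_equalRev_comp_sub_one hnonneg, obj_const_one hnonneg]
  refine ⟨le_antisymm (sSup_le ?_) (le_sSup ⟨_, _, ⟨fun _ => ⟨zero_le_one, le_rfl⟩,
    fun _ _ _ _ => le_rfl⟩, hpost.symm⟩), hpost⟩
  rintro _ ⟨x, p, hF, rfl⟩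
  rw [eInt_equalRev_comp_sub_one hnonneg]
  by_cases hu : ∀ v, 1 ≤ v → 0 ≤ utility x p v
  · exact obj_le_of_utility_nonneg hderiv hslope hF hu
  · push Not at hu
    obtain ⟨v₀, hv₀, hneg⟩ := hu
    rw [obj_eq_bot_of_utility_neg hF hv₀ hneg]
    exact bot_le
end
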